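/- arXiv:2412.17768 — 6 statements merged into one kernel-verified Lean document; each statement's English description precedes it below -/
import Mathlib

section
/- Let d > 6 be an integer and let α₁, α₂ be real numbers with α₁ > −d, α₂ > −d and α₁ + α₂ + d < 0. Then there exists a constant C = C(d, α₁, α₂) > 0 such that for all x, y ∈ ℤ^d with x ≠ y, one has ∑_{z ∈ ℤ^d} |z − x|^{α₁} |z − y|^{α₂} ≤ C |x − y|^{α₁ + α₂ + d}, where the (degenerate) terms with z = x or z = y are omitted from the sum. -/
/-!
Put `R = |x - y|` and split `ℤ^d` into the points within `R/2` of `x`, those within `R/2` of `y`,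
and the rest. Near `x` we have `|z - y| ≥ R/2`, so these points contribute at most
`(R/2)^α₂ ∑_{0<|w|≤R/2} |w|^α₁ ≲ R^(α₁+α₂+d)`, the sum converging at `0` because `α₁ > -d`;
symmetrically near `y`. Far from both, `|z - y| ≥ |z - x|/3`, and the contribution is at most a
multiple of `∑_{|w|>R/2} |w|^(α₁+α₂) ≲ R^(α₁+α₂+d)`, which converges because `α₁ + α₂ + d < 0`.
Both radial sums reduce to sums over `ℕ` because at most `2d·3^(d-1)·n^(d-1)` lattice points
have sup-norm `n`; the one-dimensional sums `∑_{n≤N} n^s` and `∑_{n≥m} n^s` are then bounded by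
telescoping Bernoulli's inequality and by the integral test, respectively.
-/

open scoped ENNReal

/-- The power `|x|^a` (ℓ^∞ norm of a lattice point, real exponent), valued in `[0,∞]`,
with the convention that the term is omitted (set to `0`) when the base vanishes. -/
noncomputable def latPow {d : ℕ} (x : Fin d → ℤ) (a : ℝ) : ℝ≥0∞ :=
  if x = 0 then 0 else ENNReal.ofReal (‖x‖ ^ a)

open scoped NNReal
open Finset

namespace LatticeSum

variable {d : ℕ}

lemma mul_rpow_sub_one_le_rpow_sub_rpow {p x : ℝ} (hp₀ : 0 ≤ p) (hp₁ : p ≤ 1) (hx : 1 ≤ x) :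
    p * x ^ (p - 1) ≤ x ^ p - (x - 1) ^ p := by
  have hx₀ : 0 < x := by linarith
  have bernoulli := rpow_one_add_le_one_add_mul_self (s := -x⁻¹)
    (by linarith [inv_le_one_of_one_le₀ hx]) hp₀ hp₁
  have hsub : x - 1 = x * (1 + -x⁻¹) := by field_simp; ring
  calc p * x ^ (p - 1) = x ^ p - x ^ p * (1 + p * -x⁻¹) := by
        rw [Real.rpow_sub_one hx₀.ne']; field_simp; ring
    _ ≤ x ^ p - (x - 1) ^ p := by
        rw [hsub, Real.mul_rpow hx₀.le (by linarith [inv_le_one_of_one_le₀ hx])]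
        gcongr

lemma sum_Icc_rpow_le_of_nonpos {s : ℝ} (hs : -1 < s) (hs₀ : s ≤ 0) (N : ℕ) :
    ∑ n ∈ Icc 1 N, (n : ℝ) ^ s ≤ N ^ (s + 1) / (s + 1) := by
  have hs₁ : 0 < s + 1 := by linarith
  induction N with
  | zero => simp [Real.zero_rpow hs₁.ne']
  | succ N ih =>
    have step := mul_rpow_sub_one_le_rpow_sub_rpow hs₁.le (by linarith)
      (by simp : (1 : ℝ) ≤ (N + 1 : ℕ))
    rw [add_sub_cancel_right, Nat.cast_add_one, add_sub_cancel_right] at step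
    rw [sum_Icc_succ_top (by omega), le_div_iff₀ hs₁]
    rw [le_div_iff₀ hs₁] at ih
    push_cast
    linarith

lemma sum_Icc_rpow_le_of_nonneg {s : ℝ} (hs : 0 ≤ s) (N : ℕ) :
    ∑ n ∈ Icc 1 N, (n : ℝ) ^ s ≤ N ^ (s + 1) := by
  calc ∑ n ∈ Icc 1 N, (n : ℝ) ^ s ≤ #(Icc 1 N) • (N : ℝ) ^ s :=
        sum_le_card_nsmul _ _ _ fun n hn => by
          gcongr; exact_mod_cast (mem_Icc.mp hn).2
    _ = N ^ (s + 1) := by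
        rcases N.eq_zero_or_pos with rfl | hN
        · simp [Real.zero_rpow (by linarith : s + 1 ≠ 0)]
        · rw [Nat.card_Icc, add_tsub_cancel_right, nsmul_eq_mul,
            Real.rpow_add_one (by positivity)]; ring

lemma exists_sum_Icc_rpow_le {s : ℝ} (hs : -1 < s) :
    ∃ C > 0, ∀ N : ℕ, ∑ n ∈ Icc 1 N, (n : ℝ) ^ s ≤ C * N ^ (s + 1) := by
  rcases le_total 0 s with hs₀ | hs₀
  · exact ⟨1, one_pos, fun N => by simpa using sum_Icc_rpow_le_of_nonneg hs₀ N⟩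
  · refine ⟨(s + 1)⁻¹, by simp; linarith, fun N => ?_⟩
    rw [inv_mul_eq_div]
    exact sum_Icc_rpow_le_of_nonpos hs hs₀ N

/- Integral test, after the shift `n ^ s ≤ 2 ^ (-s) * (n + 1) ^ s` (as `n + 1 ≤ 2 * n`), which
keeps the comparison integral over `(m, ∞)` away from the singularity at `0`. -/
lemma sum_Ico_rpow_le {s : ℝ} (hs : s < -1) {m : ℕ} (hm : 1 ≤ m) (M : ℕ) :
    ∑ n ∈ Ico m M, (n : ℝ) ^ s ≤ 2 ^ (-s) * (m ^ (s + 1) / -(s + 1)) := by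
  have hm₀ : (0 : ℝ) < m := by exact_mod_cast hm
  have shift : ∀ n ∈ Ico m M, (n : ℝ) ^ s ≤ 2 ^ (-s) * ((n + 1 : ℕ) : ℝ) ^ s := by
    intro n hn
    have hn : (1 : ℝ) ≤ n := by exact_mod_cast hm.trans (mem_Ico.mp hn).1
    calc (n : ℝ) ^ s = 2 ^ (-s) * (2 * n) ^ s := by
          rw [Real.mul_rpow (by norm_num) (by linarith), ← mul_assoc,
            ← Real.rpow_add (by norm_num), neg_add_cancel, Real.rpow_zero, one_mul]
      _ ≤ 2 ^ (-s) * ((n + 1 : ℕ) : ℝ) ^ s := by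
          refine mul_le_mul_of_nonneg_left (Real.rpow_le_rpow_of_nonpos (by positivity) ?_ ?_)
            (by positivity)
          · push_cast; linarith
          · linarith
  have integral_test := AntitoneOn.sum_Ico_le_integral (b := M)
    ((Real.antitoneOn_rpow_Ioi_of_exponent_nonpos (by linarith : s ≤ 0)).mono
      fun t ht => hm₀.trans_le ht.1)
    (integrableOn_Ioi_rpow_of_lt hs hm₀) fun t ht => Real.rpow_nonneg (hm₀.trans ht).le _
  rw [integral_Ioi_rpow_of_lt hs hm₀, neg_div, ← div_neg] at integral_test
  calc ∑ n ∈ Ico m M, (n : ℝ) ^ s ≤ ∑ n ∈ Ico m M, 2 ^ (-s) * ((n + 1 : ℕ) : ℝ) ^ s :=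
        sum_le_sum shift
    _ ≤ _ := by rw [← mul_sum]; gcongr

lemma exists_tsum_rpow_le_of_le {s : ℝ} (hs : -1 < s) :
    ∃ C > 0, ∀ r : ℝ, 0 ≤ r →
      ∑' n : ℕ, (if n ≠ 0 ∧ (n : ℝ) ≤ r then ENNReal.ofReal ((n : ℝ) ^ s) else 0) ≤
        ENNReal.ofReal (C * r ^ (s + 1)) := by
  obtain ⟨C, hC, hsum⟩ := exists_sum_Icc_rpow_le hs
  refine ⟨C, hC, fun r hr => ?_⟩
  have hmem : ∀ n : ℕ, n ≠ 0 ∧ (n : ℝ) ≤ r ↔ n ∈ Icc 1 ⌊r⌋₊ := fun n => by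
    rw [mem_Icc, Nat.le_floor_iff hr, Nat.one_le_iff_ne_zero]
  simp_rw [hmem]
  rw [tsum_eq_sum (s := Icc 1 ⌊r⌋₊) fun n hn => if_neg hn, sum_ite_mem, inter_self,
    ← ENNReal.ofReal_sum_of_nonneg fun n _ => by positivity]
  refine ENNReal.ofReal_le_ofReal ((hsum _).trans ?_)
  gcongr
  · linarith
  · exact Nat.floor_le hr

lemma exists_tsum_rpow_le_of_lt {s : ℝ} (hs : s < -1) :
    ∃ C > 0, ∀ r : ℝ, 0 < r →
      ∑' n : ℕ, (if n ≠ 0 ∧ r < n then ENNReal.ofReal ((n : ℝ) ^ s) else 0) ≤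
        ENNReal.ofReal (C * r ^ (s + 1)) := by
  refine ⟨2 ^ (-s) / -(s + 1), div_pos (by positivity) (by linarith), fun r hr => ?_⟩
  set m := ⌊r⌋₊ + 1
  have hmem : ∀ n : ℕ, n ≠ 0 ∧ r < n ↔ m ≤ n := fun n => by
    rw [← Nat.floor_lt hr.le]; omega
  simp_rw [hmem]
  refine ENNReal.tsum_le_of_sum_range_le fun M => ?_
  rw [← sum_filter, ← ENNReal.ofReal_sum_of_nonneg fun n _ => by positivity]
  have hfilter : (range M).filter (m ≤ ·) = Ico m M := by ext; simp; omega
  refine ENNReal.ofReal_le_ofReal ?_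
  rw [hfilter]
  refine (sum_Ico_rpow_le hs (by omega) M).trans ?_
  rw [mul_div_assoc', div_mul_eq_mul_div]
  refine div_le_div_of_nonneg_right (mul_le_mul_of_nonneg_left ?_ (by positivity)) (by linarith)
  exact Real.rpow_le_rpow_of_nonpos hr (by exact_mod_cast (Nat.lt_floor_add_one r).le) (by linarith)

def supNorm (z : Fin d → ℤ) : ℕ := univ.sup fun i => (z i).natAbs

lemma norm_eq_supNorm (z : Fin d → ℤ) : ‖z‖ = supNorm z := by
  have h : ((supNorm z : ℕ) : ℝ≥0) = univ.sup fun i => ‖z i‖₊ := by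
    rw [supNorm, Nat.cast_finsetSup]
    exact sup_congr rfl fun i _ => NNReal.natCast_natAbs (z i)
  rw [Pi.norm_def, ← h, NNReal.coe_natCast]

lemma supNorm_eq_zero {z : Fin d → ℤ} : supNorm z = 0 ↔ z = 0 := by
  simp [supNorm, funext_iff]

noncomputable def cube (d n : ℕ) : Finset (Fin d → ℤ) := Fintype.piFinset fun _ => Icc (-(n : ℤ)) n

lemma mem_cube {n : ℕ} {z : Fin d → ℤ} : z ∈ cube d n ↔ supNorm z ≤ n := by
  simp only [cube, Fintype.mem_piFinset, mem_Icc, supNorm, Finset.sup_le_iff, mem_univ,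
    true_implies]
  exact forall_congr' fun i => by omega

lemma card_cube (n : ℕ) : #(cube d n) = (2 * n + 1) ^ d := by
  simp [cube, Fintype.card_piFinset, Int.card_Icc]
  congr 1; omega

lemma card_cube_sdiff_le {n : ℕ} (hn : n ≠ 0) :
    #(cube d n \ cube d (n - 1)) ≤ 2 * d * 3 ^ (d - 1) * n ^ (d - 1) := by
  have hsub : cube d (n - 1) ⊆ cube d n := fun z hz => mem_cube.mpr (by
    have := mem_cube.mp hz; omega)
  rw [card_sdiff_of_subset hsub, card_cube, card_cube]
  have hle : 2 * (n - 1) + 1 ≤ 2 * n + 1 := by omega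
  zify [Nat.pow_le_pow_left hle d, Nat.one_le_iff_ne_zero.mpr hn]
  refine (le_abs_self _).trans ((abs_pow_sub_pow_le _ _ d).trans ?_)
  rw [abs_of_nonneg (by positivity : (0 : ℤ) ≤ 2 * n + 1),
    abs_of_nonneg (by omega : (0 : ℤ) ≤ 2 * (n - 1) + 1), max_eq_left (by omega)]
  calc |(2 * n + 1 : ℤ) - (2 * (n - 1) + 1)| * d * (2 * n + 1) ^ (d - 1)
      = 2 * d * (2 * n + 1) ^ (d - 1) := by rw [abs_of_nonneg (by omega)]; ring
    _ ≤ 2 * d * (3 * n) ^ (d - 1) := by gcongr; omega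
    _ = 2 * d * 3 ^ (d - 1) * n ^ (d - 1) := by ring

lemma tsum_comp_supNorm_le (f : ℕ → ℝ≥0∞) (hf : f 0 = 0) :
    ∑' z : Fin d → ℤ, f (supNorm z) ≤
      ∑' n : ℕ, ((2 * d * 3 ^ (d - 1) * n ^ (d - 1) : ℕ) : ℝ≥0∞) * f n := by
  rw [← ENNReal.tsum_fiberwise _ supNorm]
  refine ENNReal.tsum_le_tsum fun n => ?_
  rw [tsum_congr fun z : supNorm ⁻¹' {n} => congrArg f z.2]
  rcases eq_or_ne n 0 with rfl | hn
  · simp [hf]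
  have hfiber : supNorm ⁻¹' {n} = ((cube d n \ cube d (n - 1) : Finset _) : Set (Fin d → ℤ)) := by
    ext z; simp [mem_cube]; omega
  rw [hfiber]
  refine (Finset.tsum_subtype _ fun _ => f n).trans_le ?_
  rw [sum_const, nsmul_eq_mul]
  gcongr
  exact_mod_cast card_cube_sdiff_le hn

lemma latPow_eq_ite (w : Fin d → ℤ) (a : ℝ) :
    latPow w a = if supNorm w = 0 then 0 else ENNReal.ofReal ((supNorm w : ℝ) ^ a) := by
  simp only [latPow, supNorm_eq_zero, norm_eq_supNorm]

lemma natCast_pow_mul_ofReal_rpow (hd : 0 < d) {n : ℕ} (hn : n ≠ 0) (a : ℝ) :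
    ((n ^ (d - 1) : ℕ) : ℝ≥0∞) * ENNReal.ofReal ((n : ℝ) ^ a) =
      ENNReal.ofReal ((n : ℝ) ^ (a + d - 1)) := by
  have hn₀ : (0 : ℝ) < n := by positivity
  rw [← ENNReal.ofReal_natCast, ← ENNReal.ofReal_mul (by positivity), Nat.cast_pow,
    ← Real.rpow_natCast, ← Real.rpow_add hn₀, Nat.cast_sub hd]
  congr 2
  push_cast
  ring

lemma tsum_ite_latPow_le (hd : 0 < d) (P : ℝ → Prop) [DecidablePred P] (a : ℝ) :
    ∑' w : Fin d → ℤ, (if P ‖w‖ then latPow w a else 0) ≤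
      (2 * d * 3 ^ (d - 1) : ℕ) *
        ∑' n : ℕ, if n ≠ 0 ∧ P n then ENNReal.ofReal ((n : ℝ) ^ (a + d - 1)) else 0 := by
  let f : ℕ → ℝ≥0∞ := fun n => if n ≠ 0 ∧ P n then ENNReal.ofReal ((n : ℝ) ^ a) else 0
  have hf : ∀ w : Fin d → ℤ, (if P ‖w‖ then latPow w a else 0) = f (supNorm w) := by
    intro w
    simp only [f, latPow_eq_ite, norm_eq_supNorm]
    split_ifs <;> simp_all
  calc _ = ∑' w : Fin d → ℤ, f (supNorm w) := tsum_congr hf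
    _ ≤ _ := tsum_comp_supNorm_le f (by simp [f])
    _ = _ := by
      rw [← ENNReal.tsum_mul_left]
      refine tsum_congr fun n => ?_
      simp only [f]
      split_ifs with h
      · rw [Nat.cast_mul (2 * d * 3 ^ (d - 1)), mul_assoc,
          natCast_pow_mul_ofReal_rpow hd h.1]
      · simp

lemma exists_tsum_latPow_le_of_norm_le (hd : 0 < d) {a : ℝ} (ha : -(d : ℝ) < a) :
    ∃ C > 0, ∀ r : ℝ, 0 ≤ r →
      ∑' w : Fin d → ℤ, (if ‖w‖ ≤ r then latPow w a else 0) ≤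
        ENNReal.ofReal (C * r ^ (a + d)) := by
  obtain ⟨C, hC, hsum⟩ := exists_tsum_rpow_le_of_le (s := a + d - 1) (by linarith)
  refine ⟨(2 * d * 3 ^ (d - 1) : ℕ) * C, by positivity, fun r hr => ?_⟩
  refine (tsum_ite_latPow_le hd (· ≤ r) a).trans ?_
  rw [mul_assoc ((2 * d * 3 ^ (d - 1) : ℕ) : ℝ), ENNReal.ofReal_mul (by positivity),
    ENNReal.ofReal_natCast]
  gcongr
  simpa using hsum r hr

lemma exists_tsum_latPow_le_of_lt_norm (hd : 0 < d) {a : ℝ} (ha : a + d < 0) :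
    ∃ C > 0, ∀ r : ℝ, 0 < r →
      ∑' w : Fin d → ℤ, (if r < ‖w‖ then latPow w a else 0) ≤
        ENNReal.ofReal (C * r ^ (a + d)) := by
  obtain ⟨C, hC, hsum⟩ := exists_tsum_rpow_le_of_lt (s := a + d - 1) (by linarith)
  refine ⟨(2 * d * 3 ^ (d - 1) : ℕ) * C, by positivity, fun r hr => ?_⟩
  refine (tsum_ite_latPow_le hd (r < ·) a).trans ?_
  rw [mul_assoc ((2 * d * 3 ^ (d - 1) : ℕ) : ℝ), ENNReal.ofReal_mul (by positivity),
    ENNReal.ofReal_natCast]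
  gcongr
  simpa using hsum r hr

lemma tsum_comp_sub_right {G M : Type*} [AddGroup G] [AddCommMonoid M] [TopologicalSpace M]
    (f : G → M) (x : G) :
    ∑' z, f (z - x) = ∑' w, f w :=
  (Equiv.subRight x).tsum_eq f

lemma latPow_le_ofReal_rpow {w : Fin d → ℤ} {a t : ℝ} (ha : a ≤ 0) (ht : 0 < t) (htw : t ≤ ‖w‖) :
    latPow w a ≤ ENNReal.ofReal (t ^ a) := by
  unfold latPow
  split_ifs
  · exact zero_le
  · exact ENNReal.ofReal_le_ofReal (Real.rpow_le_rpow_of_nonpos ht htw ha)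

lemma latPow_mul_latPow (w : Fin d → ℤ) (a b : ℝ) :
    latPow w a * latPow w b = latPow w (a + b) := by
  unfold latPow
  split_ifs with hw
  · simp
  · rw [← ENNReal.ofReal_mul (by positivity), Real.rpow_add (norm_pos_iff.mpr hw)]

variable {x y z : Fin d → ℤ} {a b : ℝ}

lemma latPow_le_of_norm_sub_le (hb : b ≤ 0) (hxy : x ≠ y) (hz : ‖z - x‖ ≤ ‖x - y‖ / 2) :
    latPow (z - y) b ≤ ENNReal.ofReal ((‖x - y‖ / 2) ^ b) := by
  have hR : 0 < ‖x - y‖ := norm_pos_iff.mpr (sub_ne_zero.mpr hxy)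
  refine latPow_le_ofReal_rpow hb (by positivity) ?_
  have := norm_sub_le_norm_sub_add_norm_sub x z y
  rw [norm_sub_rev x z] at this
  linarith

lemma latPow_mul_latPow_le_of_lt_norm_sub (hb : b ≤ 0) (hx : ‖x - y‖ / 2 < ‖z - x‖)
    (hy : ‖x - y‖ / 2 < ‖z - y‖) :
    latPow (z - x) a * latPow (z - y) b ≤ ENNReal.ofReal (3 ^ (-b)) * latPow (z - x) (a + b) := by
  have hzx : 0 < ‖z - x‖ := (by positivity : 0 ≤ ‖x - y‖ / 2).trans_lt hx
  have hzy : ‖z - x‖ / 3 ≤ ‖z - y‖ := by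
    have := norm_sub_le_norm_sub_add_norm_sub z y x
    rw [norm_sub_rev y x] at this
    linarith
  have hpow :
      ENNReal.ofReal ((‖z - x‖ / 3) ^ b) = ENNReal.ofReal (3 ^ (-b)) * latPow (z - x) b := by
    rw [latPow, if_neg (norm_pos_iff.mp hzx), ← ENNReal.ofReal_mul (by positivity),
      Real.div_rpow hzx.le (by norm_num), Real.rpow_neg (by norm_num), div_eq_inv_mul]
  calc latPow (z - x) a * latPow (z - y) b
      ≤ latPow (z - x) a * ENNReal.ofReal ((‖z - x‖ / 3) ^ b) := by
        gcongr
        exact latPow_le_ofReal_rpow hb (by positivity) hzy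
    _ = ENNReal.ofReal (3 ^ (-b)) * latPow (z - x) (a + b) := by
        rw [hpow, mul_left_comm, latPow_mul_latPow]

lemma latPow_mul_latPow_le (ha : a ≤ 0) (hb : b ≤ 0) (hxy : x ≠ y) (z : Fin d → ℤ) :
    latPow (z - x) a * latPow (z - y) b ≤
      ENNReal.ofReal ((‖x - y‖ / 2) ^ b) *
          (if ‖z - x‖ ≤ ‖x - y‖ / 2 then latPow (z - x) a else 0) +
        ENNReal.ofReal ((‖x - y‖ / 2) ^ a) *
          (if ‖z - y‖ ≤ ‖x - y‖ / 2 then latPow (z - y) b else 0) +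
        ENNReal.ofReal (3 ^ (-b)) *
          (if ‖x - y‖ / 2 < ‖z - x‖ then latPow (z - x) (a + b) else 0) := by
  by_cases hx : ‖z - x‖ ≤ ‖x - y‖ / 2
  · rw [if_pos hx, mul_comm]
    refine le_add_right (le_add_right ?_)
    gcongr
    exact latPow_le_of_norm_sub_le hb hxy hx
  by_cases hy : ‖z - y‖ ≤ ‖x - y‖ / 2
  · rw [if_pos hy]
    refine le_add_right (le_add_left ?_)
    gcongr
    rw [norm_sub_rev x y] at hy ⊢
    exact latPow_le_of_norm_sub_le ha hxy.symm hy
  · rw [if_pos (not_le.mp hx)]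
    exact le_add_left (latPow_mul_latPow_le_of_lt_norm_sub hb (not_le.mp hx) (not_le.mp hy))

lemma tsum_latPow_mul_latPow_le (ha : a ≤ 0) (hb : b ≤ 0) (hxy : x ≠ y) :
    ∑' z, latPow (z - x) a * latPow (z - y) b ≤
      ENNReal.ofReal ((‖x - y‖ / 2) ^ b) *
          ∑' w : Fin d → ℤ, (if ‖w‖ ≤ ‖x - y‖ / 2 then latPow w a else 0) +
        ENNReal.ofReal ((‖x - y‖ / 2) ^ a) *
          ∑' w : Fin d → ℤ, (if ‖w‖ ≤ ‖x - y‖ / 2 then latPow w b else 0) +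
        ENNReal.ofReal (3 ^ (-b)) *
          ∑' w : Fin d → ℤ, (if ‖x - y‖ / 2 < ‖w‖ then latPow w (a + b) else 0) := by
  refine (ENNReal.tsum_le_tsum (latPow_mul_latPow_le ha hb hxy)).trans_eq ?_
  rw [ENNReal.tsum_add, ENNReal.tsum_add, ENNReal.tsum_mul_left, ENNReal.tsum_mul_left,
    ENNReal.tsum_mul_left,
    tsum_comp_sub_right (fun w => if ‖w‖ ≤ ‖x - y‖ / 2 then latPow w a else 0),
    tsum_comp_sub_right (fun w => if ‖w‖ ≤ ‖x - y‖ / 2 then latPow w b else 0),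
    tsum_comp_sub_right (fun w => if ‖x - y‖ / 2 < ‖w‖ then latPow w (a + b) else 0)]

end LatticeSum

open LatticeSum in
theorem statement0 (d : ℕ) (hd : 6 < d) (α₁ α₂ : ℝ)
    (h₁ : -(d : ℝ) < α₁) (h₂ : -(d : ℝ) < α₂) (h₃ : α₁ + α₂ + d < 0) :
    ∃ C : ℝ, 0 < C ∧ ∀ x y : Fin d → ℤ, x ≠ y →
      ∑' z : Fin d → ℤ, latPow (z - x) α₁ * latPow (z - y) α₂ ≤
        ENNReal.ofReal (C * ‖x - y‖ ^ (α₁ + α₂ + d)) := by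
  have hd₀ : 0 < d := by omega
  obtain ⟨C₁, hC₁, near₁⟩ := exists_tsum_latPow_le_of_norm_le hd₀ h₁
  obtain ⟨C₂, hC₂, near₂⟩ := exists_tsum_latPow_le_of_norm_le hd₀ h₂
  obtain ⟨C₃, hC₃, far⟩ := exists_tsum_latPow_le_of_lt_norm hd₀ h₃
  refine ⟨(C₁ + C₂ + 3 ^ (-α₂) * C₃) * 2 ^ (-(α₁ + α₂ + d)), by positivity, fun x y hxy => ?_⟩
  set ρ := ‖x - y‖ / 2 with hρ_def
  have hρ : 0 < ρ := by have := norm_pos_iff.mpr (sub_ne_zero.mpr hxy); positivity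
  calc _ ≤ _ := tsum_latPow_mul_latPow_le (by linarith) (by linarith) hxy
    _ ≤ ENNReal.ofReal (ρ ^ α₂) * ENNReal.ofReal (C₁ * ρ ^ (α₁ + d)) +
          ENNReal.ofReal (ρ ^ α₁) * ENNReal.ofReal (C₂ * ρ ^ (α₂ + d)) +
          ENNReal.ofReal (3 ^ (-α₂)) * ENNReal.ofReal (C₃ * ρ ^ (α₁ + α₂ + d)) := by
        gcongr
        exacts [near₁ ρ hρ.le, near₂ ρ hρ.le, far ρ hρ]
    _ = ENNReal.ofReal ((C₁ + C₂ + 3 ^ (-α₂) * C₃) * ρ ^ (α₁ + α₂ + d)) := by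
        rw [← ENNReal.ofReal_mul (by positivity), ← ENNReal.ofReal_mul (by positivity),
          ← ENNReal.ofReal_mul (by positivity),
          ← ENNReal.ofReal_add (by positivity) (by positivity),
          ← ENNReal.ofReal_add (by positivity) (by positivity)]
        congr 1
        rw [Real.rpow_add hρ α₁, Real.rpow_add hρ α₂, Real.rpow_add hρ (α₁ + α₂),
          Real.rpow_add hρ α₁ α₂]
        ring
    _ = _ := by
        rw [hρ_def, Real.div_rpow (norm_nonneg _) zero_le_two, Real.rpow_neg zero_le_two]
        congr 1
        ring
end

section
/- Let d > 6 be an integer. There exists a constant C = C(d) > 0 such that for all x, y ∈ ℤ^d with x ≠ y, one has ∑_{z₁, z₂ ∈ ℤ^d} |x − z₁|^{2−d} |z₁ − z₂|^{2−d} |z₂ − y|^{2−d} ≤ C |x − y|^{6−d}, where terms in which any of x − z₁, z₁ − z₂, z₂ − y vanishes are omitted from the sum. -/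
open scoped ENNReal

/-!
Replacing `|w|` by `⟨w⟩ = max 1 |w|` only enlarges each kernel (nothing changes off the origin)
and makes it finite and positive on the diagonal, so the convolution estimate
`∑_z ⟨x - z⟩^(-a) ⟨z - y⟩^(-b) ≤ C ⟨x - y⟩^(d - a - b)` for `a, b ≤ d - 1` and `a + b ≥ d + 1`
holds for all `x, y` and can be iterated: first with `a = b = d - 2`, then with `a = d - 4`,
`b = d - 2`, which is where `d ≥ 7` is needed.

For the estimate put `R = ⟨x - y⟩`. The larger of `⟨x - z⟩`, `⟨z - y⟩` is at least `R / 2` and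
at least the smaller one `u`, say `u = ⟨x - z⟩`, so the term is bounded by the radial majorant
`u^(-a) min ((R/2)^(-b), u^(-b))`. Summed over the spheres of `ℤ^d`, which have `O(n^(d-1))`
points, the majorant gives `O(R^(d-a) R^(-b))` from the ball `u ≤ R` and
`O(∑_{n > R} n^(d-1-a-b)) = O(R^(d-a-b))` from the tail.
-/

open Finset

section LatticeNorm

variable {d : ℕ}

def natNorm (w : Fin d → ℤ) : ℕ := univ.sup fun i => (w i).natAbs

lemma norm_eq_natNorm (w : Fin d → ℤ) : ‖w‖ = natNorm w := by
  have : ‖w‖₊ = natNorm w := by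
    rw [Pi.nnnorm_def, natNorm, Nat.cast_finsetSup]
    simp [← NNReal.natCast_natAbs]
  rw [← coe_nnnorm, this, NNReal.coe_natCast]

lemma natNorm_le_iff_mem_Icc {w : Fin d → ℤ} {n : ℕ} :
    natNorm w ≤ n ↔ w ∈ Icc (-(n : Fin d → ℤ)) n := by
  simp only [natNorm, Finset.sup_le_iff, mem_univ, true_implies, mem_Icc, Pi.le_def,
    Pi.neg_apply, Pi.natCast_apply]
  exact ⟨fun h => ⟨fun i => by have := h i; omega, fun i => by have := h i; omega⟩,
    fun h i => by have := h.1 i; have := h.2 i; omega⟩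

lemma one_le_norm_of_ne_zero {w : Fin d → ℤ} (hw : w ≠ 0) : 1 ≤ ‖w‖ := by
  obtain ⟨i, hi⟩ := Function.ne_iff.mp hw
  calc (1 : ℝ) ≤ ‖w i‖ := by rw [Int.norm_eq_abs]; exact_mod_cast Int.one_le_abs hi
    _ ≤ ‖w‖ := norm_le_pi_norm w i

lemma card_Icc_succ_sdiff_le (k : ℕ) :
    #(Icc (-((k + 1 : ℕ) : Fin d → ℤ)) (k + 1 : ℕ) \ Icc (-(k : Fin d → ℤ)) k) ≤
      2 * d * (2 * k + 3) ^ (d - 1) := by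
  rw [card_sdiff_of_subset (Icc_subset_Icc (by simp) (by simp)), Pi.card_Icc, Pi.card_Icc]
  simp only [Pi.neg_apply, Pi.natCast_apply, Int.card_Icc, prod_const, card_univ,
    Fintype.card_fin]
  grind [abs_pow_sub_pow_le (α := ℤ) (2 * k + 3) (2 * k + 1) d]

lemma sum_Icc_comp_natNorm_le {f : ℕ → ℝ} (hf : ∀ k, 0 ≤ f k) (N : ℕ) :
    ∑ w ∈ Icc (-(N : Fin d → ℤ)) N, f (natNorm w) ≤
      ∑ k ∈ range (N + 1), (2 * d + 1) * (2 * k + 1 : ℝ) ^ (d - 1) * f k := by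
  have hmono : Monotone fun n : ℕ => Icc (-(n : Fin d → ℤ)) n := fun m n h =>
    Icc_subset_Icc (neg_le_neg (Nat.mono_cast h)) (Nat.mono_cast h)
  rw [sum_eq_sum_range_sdiff _ hmono, sum_range_succ']
  refine (add_comm _ _).le.trans (add_le_add (sum_le_sum fun k _ => ?_) ?_)
  · have hshell : ∀ w ∈ Icc (-((k + 1 : ℕ) : Fin d → ℤ)) (k + 1 : ℕ) \ Icc (-(k : Fin d → ℤ)) k,
        natNorm w = k + 1 := by
      intro w hw
      rw [mem_sdiff, ← natNorm_le_iff_mem_Icc, ← natNorm_le_iff_mem_Icc] at hw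
      omega
    rw [sum_congr rfl fun w hw => congrArg f (hshell w hw), sum_const, nsmul_eq_mul]
    gcongr
    · exact hf _
    · calc (#_ : ℝ) ≤ (2 * d * (2 * k + 3) ^ (d - 1) : ℕ) := by
            exact_mod_cast card_Icc_succ_sdiff_le k
        _ ≤ (2 * d + 1) * (2 * ((k + 1 : ℕ) : ℝ) + 1) ^ (d - 1) := by
            push_cast
            rw [show 2 * ((k : ℝ) + 1) + 1 = 2 * k + 3 by ring]
            exact mul_le_mul_of_nonneg_right (by linarith) (by positivity)
  · have h0 : natNorm (0 : Fin d → ℤ) = 0 := by simp [natNorm]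
    simp only [Nat.cast_zero, neg_zero, Icc_self, sum_singleton, h0, mul_zero, zero_add, one_pow,
      mul_one]
    nlinarith [hf 0]

lemma tsum_ofReal_comp_natNorm_le {f : ℕ → ℝ} (hf : ∀ k, 0 ≤ f k) {B : ℝ}
    (hB : ∀ N, ∑ k ∈ range N, (2 * d + 1) * (2 * k + 1 : ℝ) ^ (d - 1) * f k ≤ B) :
    ∑' w : Fin d → ℤ, ENNReal.ofReal (f (natNorm w)) ≤ ENNReal.ofReal B := by
  refine ENNReal.summable.tsum_le_of_sum_le fun s => ?_
  set N := s.sup natNorm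
  have hs : s ⊆ Icc (-(N : Fin d → ℤ)) N := fun w hw => natNorm_le_iff_mem_Icc.mp (le_sup hw)
  calc ∑ w ∈ s, ENNReal.ofReal (f (natNorm w))
      ≤ ∑ w ∈ Icc (-(N : Fin d → ℤ)) N, ENNReal.ofReal (f (natNorm w)) :=
        sum_le_sum_of_subset hs
    _ = ENNReal.ofReal (∑ w ∈ Icc (-(N : Fin d → ℤ)) N, f (natNorm w)) :=
        (ENNReal.ofReal_sum_of_nonneg fun w _ => hf _).symm
    _ ≤ ENNReal.ofReal B :=
        ENNReal.ofReal_le_ofReal ((sum_Icc_comp_natNorm_le hf N).trans (hB _))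

lemma tsum_ofReal_comp_max_one_norm_le {g : ℝ → ℝ} (hg : ∀ u, 1 ≤ u → 0 ≤ g u) {B : ℝ}
    (hB : ∀ N, ∑ k ∈ range N, max 1 (k : ℝ) ^ (d - 1) * g (max 1 k) ≤ B) :
    ∑' w : Fin d → ℤ, ENNReal.ofReal (g (max 1 ‖w‖)) ≤
      ENNReal.ofReal ((2 * d + 1) * 3 ^ (d - 1) * B) := by
  simp_rw [norm_eq_natNorm]
  refine tsum_ofReal_comp_natNorm_le (f := fun k => g (max 1 k))
    (fun k => hg _ (le_max_left _ _)) fun N => ?_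
  calc ∑ k ∈ range N, (2 * d + 1) * (2 * k + 1 : ℝ) ^ (d - 1) * g (max 1 k)
      ≤ ∑ k ∈ range N, (2 * d + 1) * 3 ^ (d - 1) * (max 1 (k : ℝ) ^ (d - 1) * g (max 1 k)) := by
        refine sum_le_sum fun k _ => ?_
        have hk : (2 * k + 1 : ℝ) ^ (d - 1) ≤ 3 ^ (d - 1) * max 1 (k : ℝ) ^ (d - 1) := by
          rw [← mul_pow]
          gcongr
          linarith [le_max_left 1 (k : ℝ), le_max_right 1 (k : ℝ)]
        calc (2 * d + 1) * (2 * k + 1 : ℝ) ^ (d - 1) * g (max 1 k)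
            ≤ (2 * d + 1) * (3 ^ (d - 1) * max 1 (k : ℝ) ^ (d - 1)) * g (max 1 k) := by
              gcongr
              exact hg _ (le_max_left _ _)
          _ = _ := by ring
    _ ≤ (2 * d + 1) * 3 ^ (d - 1) * B := by
        rw [← mul_sum]
        gcongr
        exact hB N

end LatticeNorm

section RadialSums

open Real

lemma sum_filter_max_one_rpow_le {p R : ℝ} (hp : 0 ≤ p) (hR : 1 ≤ R) (N : ℕ) :
    ∑ k ∈ range N with max 1 ((k : ℕ) : ℝ) ≤ R, max 1 (k : ℝ) ^ p ≤ 2 * R ^ (p + 1) := by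
  have hcard : (#{k ∈ range N | max 1 ((k : ℕ) : ℝ) ≤ R} : ℝ) ≤ 2 * R := by
    calc (#{k ∈ range N | max 1 ((k : ℕ) : ℝ) ≤ R} : ℝ) ≤ #(range (⌊R⌋₊ + 1)) := by
          gcongr
          intro k hk
          rw [mem_filter] at hk
          exact mem_range_succ_iff.mpr (Nat.le_floor ((le_max_right _ _).trans hk.2))
      _ ≤ 2 * R := by
          rw [card_range, Nat.cast_add_one]
          linarith [Nat.floor_le (by linarith : 0 ≤ R)]
  calc ∑ k ∈ range N with max 1 ((k : ℕ) : ℝ) ≤ R, max 1 (k : ℝ) ^ p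
      ≤ #{k ∈ range N | max 1 ((k : ℕ) : ℝ) ≤ R} • R ^ p :=
        sum_le_card_nsmul _ _ _ fun k hk =>
          rpow_le_rpow (by positivity) (mem_filter.mp hk).2 hp
    _ ≤ 2 * R * R ^ p := by
        rw [nsmul_eq_mul]
        gcongr
    _ = 2 * R ^ (p + 1) := by
        rw [rpow_add_one (by positivity)]
        ring

lemma sum_filter_max_one_rpow_neg_le {q R : ℝ} (hq : 2 ≤ q) (hR : 1 ≤ R) (N : ℕ) :
    ∑ k ∈ range N with R < max 1 ((k : ℕ) : ℝ), max 1 (k : ℝ) ^ (-q) ≤ 2 * R ^ (1 - q) := by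
  have hterm : ∀ k : ℕ, R < max 1 (k : ℝ) →
      max 1 (k : ℝ) ^ (-q) ≤ R ^ (2 - q) * ((k : ℝ) ^ 2)⁻¹ := by
    intro k hk
    have hRk : R < k := (lt_max_iff.mp hk).resolve_left (not_lt.mpr hR)
    rw [max_eq_right (by linarith), show -q = (2 - q) + -2 by ring,
      rpow_add (by linarith : (0 : ℝ) < k), rpow_neg (by positivity), rpow_two]
    exact mul_le_mul_of_nonneg_right
      (rpow_le_rpow_of_nonpos (by linarith) hRk.le (by linarith)) (by positivity)
  have hsub : {k ∈ range N | R < max 1 ((k : ℕ) : ℝ)} ⊆ Ioo ⌊R⌋₊ N := by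
    intro k hk
    rw [mem_filter, mem_range] at hk
    exact mem_Ioo.mpr ⟨(Nat.floor_lt (by linarith)).mpr
      ((lt_max_iff.mp hk.2).resolve_left (not_lt.mpr hR)), hk.1⟩
  calc ∑ k ∈ range N with R < max 1 ((k : ℕ) : ℝ), max 1 (k : ℝ) ^ (-q)
      ≤ ∑ k ∈ range N with R < max 1 ((k : ℕ) : ℝ), R ^ (2 - q) * ((k : ℝ) ^ 2)⁻¹ :=
        sum_le_sum fun k hk => hterm k (mem_filter.mp hk).2
    _ ≤ R ^ (2 - q) * ∑ k ∈ Ioo ⌊R⌋₊ N, ((k : ℝ) ^ 2)⁻¹ := by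
        rw [← mul_sum]
        gcongr
    _ ≤ R ^ (2 - q) * (2 / R) := by
        gcongr
        exact (sum_Ioo_inv_sq_le _ _).trans
          (div_le_div_of_nonneg_left zero_le_two (by linarith) (Nat.lt_floor_add_one R).le)
    _ = 2 * R ^ (1 - q) := by
        rw [show 1 - q = (2 - q) - 1 by ring, rpow_sub_one (by positivity)]
        ring

noncomputable def convMajorant (a b R u : ℝ) : ℝ := u ^ (-a) * min ((R / 2) ^ (-b)) (u ^ (-b))

lemma convMajorant_nonneg (a b : ℝ) {R u : ℝ} (hR : 0 ≤ R) (hu : 0 ≤ u) :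
    0 ≤ convMajorant a b R u := by
  unfold convMajorant
  positivity

lemma rpow_neg_mul_rpow_neg_le_convMajorant {a b R u v : ℝ} (ha : 0 ≤ a) (hb : 0 ≤ b)
    (hR : 0 < R) (hu : 0 < u) (hv : 0 < v) (huv : R ≤ u + v) :
    u ^ (-a) * v ^ (-b) ≤ convMajorant a b R u + convMajorant b a R v := by
  wlog h : u ≤ v generalizing a b u v
  · rw [mul_comm, add_comm]
    exact this hb ha hv hu (by linarith) (by linarith)
  have hv' : v ^ (-b) ≤ min ((R / 2) ^ (-b)) (u ^ (-b)) :=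
    le_min (rpow_le_rpow_of_nonpos (by positivity) (by linarith) (by linarith))
      (rpow_le_rpow_of_nonpos hu h (by linarith))
  calc u ^ (-a) * v ^ (-b) ≤ convMajorant a b R u :=
        mul_le_mul_of_nonneg_left hv' (by positivity)
    _ ≤ convMajorant a b R u + convMajorant b a R v :=
        le_add_of_nonneg_right (convMajorant_nonneg b a hR.le hv.le)

lemma sum_range_pow_mul_convMajorant_le (e : ℕ) {a b R : ℝ} (hR : 1 ≤ R) (hae : a ≤ e)
    (habe : e + 2 ≤ a + b) (N : ℕ) :
    ∑ k ∈ range N, max 1 (k : ℝ) ^ e * convMajorant a b R (max 1 k) ≤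
      (2 ^ (b + 1) + 2) * R ^ (e + 1 - a - b) := by
  have hpow : ∀ u : ℝ, 0 < u → ∀ c : ℝ, u ^ e * u ^ c = u ^ (e + c) := fun u hu c => by
    rw [← rpow_natCast, ← rpow_add hu]
  rw [← sum_filter_add_sum_filter_not _ (fun k : ℕ => max 1 (k : ℝ) ≤ R)]
  simp only [not_le]
  have hball : ∀ k : ℕ,
      max 1 (k : ℝ) ^ e * convMajorant a b R (max 1 k) ≤
        2 ^ b * R ^ (-b) * max 1 (k : ℝ) ^ (e - a) := by
    intro k
    have hu : (0 : ℝ) < max 1 (k : ℝ) := lt_max_of_lt_left one_pos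
    calc max 1 (k : ℝ) ^ e * convMajorant a b R (max 1 k)
        ≤ max 1 (k : ℝ) ^ e * (max 1 (k : ℝ) ^ (-a) * (R / 2) ^ (-b)) := by
          unfold convMajorant
          gcongr
          exact min_le_left _ _
      _ = 2 ^ b * R ^ (-b) * max 1 (k : ℝ) ^ (e - a) := by
          rw [← mul_assoc, hpow _ hu, div_rpow (by linarith) zero_le_two, rpow_neg zero_le_two,
            ← sub_eq_add_neg]
          field_simp
  have htail : ∀ k : ℕ,
      max 1 (k : ℝ) ^ e * convMajorant a b R (max 1 k) ≤ max 1 (k : ℝ) ^ (-(a + b - e)) := by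
    intro k
    have hu : (0 : ℝ) < max 1 (k : ℝ) := lt_max_of_lt_left one_pos
    calc max 1 (k : ℝ) ^ e * convMajorant a b R (max 1 k)
        ≤ max 1 (k : ℝ) ^ e * (max 1 (k : ℝ) ^ (-a) * max 1 (k : ℝ) ^ (-b)) := by
          unfold convMajorant
          gcongr
          exact min_le_right _ _
      _ = max 1 (k : ℝ) ^ (-(a + b - e)) := by
          rw [← rpow_add hu, hpow _ hu]
          ring_nf
  calc _ ≤ ∑ k ∈ range N with max 1 ((k : ℕ) : ℝ) ≤ R, 2 ^ b * R ^ (-b) * max 1 (k : ℝ) ^ (e - a) +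
        ∑ k ∈ range N with R < max 1 ((k : ℕ) : ℝ), max 1 (k : ℝ) ^ (-(a + b - e)) :=
        add_le_add (sum_le_sum fun k _ => hball k) (sum_le_sum fun k _ => htail k)
    _ ≤ 2 ^ b * R ^ (-b) * (2 * R ^ (e - a + 1)) + 2 * R ^ (1 - (a + b - e)) := by
        rw [← mul_sum]
        gcongr
        · exact sum_filter_max_one_rpow_le (by linarith) hR N
        · exact sum_filter_max_one_rpow_neg_le (by linarith) hR N
    _ = (2 ^ (b + 1) + 2) * R ^ (e + 1 - a - b) := by
        rw [rpow_add_one two_ne_zero, mul_mul_mul_comm, ← rpow_add (by linarith)]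
        ring_nf

end RadialSums

section Convolution

variable {d : ℕ}

noncomputable def bracketPow (w : Fin d → ℤ) (a : ℝ) : ℝ≥0∞ :=
  ENNReal.ofReal (max 1 ‖w‖ ^ a)

lemma latPow_le_bracketPow (w : Fin d → ℤ) (a : ℝ) : latPow w a ≤ bracketPow w a := by
  unfold latPow bracketPow
  split_ifs with hw
  · exact zero_le
  · rw [max_eq_right (one_le_norm_of_ne_zero hw)]

lemma max_one_norm_sub_le (x y z : Fin d → ℤ) :
    max 1 ‖x - y‖ ≤ max 1 ‖x - z‖ + max 1 ‖z - y‖ :=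
  max_le (by linarith [le_max_left 1 ‖x - z‖, le_max_left 1 ‖z - y‖])
    ((norm_sub_le_norm_sub_add_norm_sub x z y).trans
      (add_le_add (le_max_right _ _) (le_max_right _ _)))

lemma tsum_ofReal_convMajorant_le {a b R : ℝ} (hd : 1 ≤ d) (ha : a + 1 ≤ d)
    (hab : d + 1 ≤ a + b) (hR : 1 ≤ R) :
    ∑' w : Fin d → ℤ, ENNReal.ofReal (convMajorant a b R (max 1 ‖w‖)) ≤
      ENNReal.ofReal ((2 * d + 1) * 3 ^ (d - 1) * ((2 ^ (b + 1) + 2) * R ^ (d - a - b))) := by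
  have he : ((d - 1 : ℕ) : ℝ) = d - 1 := by rw [Nat.cast_sub hd, Nat.cast_one]
  refine tsum_ofReal_comp_max_one_norm_le (g := convMajorant a b R)
    (fun u hu => convMajorant_nonneg _ _ (by linarith) (by linarith)) fun N => ?_
  refine (sum_range_pow_mul_convMajorant_le (d - 1) hR (by rw [he]; linarith)
    (by rw [he]; linarith) N).trans_eq ?_
  rw [he]
  ring_nf

theorem tsum_bracketPow_mul_bracketPow_le {a b : ℝ} (ha : a + 1 ≤ d) (hb : b + 1 ≤ d)
    (hab : d + 1 ≤ a + b) :
    ∃ C : ℝ, 0 < C ∧ ∀ x y : Fin d → ℤ,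
      ∑' z, bracketPow (x - z) (-a) * bracketPow (z - y) (-b) ≤
        ENNReal.ofReal C * bracketPow (x - y) (d - a - b) := by
  have hd : 1 ≤ d := Nat.one_le_cast.mp (show (1 : ℝ) ≤ d by linarith)
  set K : ℝ := (2 * d + 1) * 3 ^ (d - 1)
  refine ⟨K * ((2 ^ (b + 1) + 2) + (2 ^ (a + 1) + 2)), by positivity, fun x y => ?_⟩
  set R := max 1 ‖x - y‖ with hR_def
  have hR : 1 ≤ R := le_max_left _ _
  calc ∑' z, bracketPow (x - z) (-a) * bracketPow (z - y) (-b)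
      ≤ ∑' z, (ENNReal.ofReal (convMajorant a b R (max 1 ‖x - z‖)) +
          ENNReal.ofReal (convMajorant b a R (max 1 ‖z - y‖))) := by
        refine ENNReal.tsum_le_tsum fun z => ?_
        rw [bracketPow, bracketPow, ← ENNReal.ofReal_mul (by positivity),
          ← ENNReal.ofReal_add (convMajorant_nonneg _ _ (by linarith) (by positivity))
            (convMajorant_nonneg _ _ (by linarith) (by positivity))]
        exact ENNReal.ofReal_le_ofReal (rpow_neg_mul_rpow_neg_le_convMajorant (by linarith)
          (by linarith) (by linarith) (by positivity) (by positivity) (max_one_norm_sub_le x y z))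
    _ = ∑' w : Fin d → ℤ, ENNReal.ofReal (convMajorant a b R (max 1 ‖w‖)) +
          ∑' w : Fin d → ℤ, ENNReal.ofReal (convMajorant b a R (max 1 ‖w‖)) := by
        rw [ENNReal.tsum_add]
        congr 1
        · exact (Equiv.subLeft x).tsum_eq fun w => ENNReal.ofReal (convMajorant a b R (max 1 ‖w‖))
        · exact (Equiv.subRight y).tsum_eq fun w => ENNReal.ofReal (convMajorant b a R (max 1 ‖w‖))
    _ ≤ ENNReal.ofReal (K * ((2 ^ (b + 1) + 2) * R ^ (d - a - b))) +
          ENNReal.ofReal (K * ((2 ^ (a + 1) + 2) * R ^ (d - b - a))) :=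
        add_le_add (tsum_ofReal_convMajorant_le hd ha hab hR)
          (tsum_ofReal_convMajorant_le hd hb (by linarith) hR)
    _ = ENNReal.ofReal (K * ((2 ^ (b + 1) + 2) + (2 ^ (a + 1) + 2))) *
          bracketPow (x - y) (d - a - b) := by
        rw [bracketPow, ← hR_def, ← ENNReal.ofReal_add (by positivity) (by positivity),
          ← ENNReal.ofReal_mul (by positivity), sub_right_comm (d : ℝ) b a]
        ring_nf

end Convolution

theorem statement1 (d : ℕ) (hd : 6 < d) :
    ∃ C : ℝ, 0 < C ∧ ∀ x y : Fin d → ℤ, x ≠ y →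
      ∑' z₁ : Fin d → ℤ, ∑' z₂ : Fin d → ℤ,
        latPow (x - z₁) ((2 : ℝ) - d) * latPow (z₁ - z₂) ((2 : ℝ) - d) *
          latPow (z₂ - y) ((2 : ℝ) - d) ≤
        ENNReal.ofReal (C * ‖x - y‖ ^ ((6 : ℝ) - d)) := by
  have hd' : (7 : ℝ) ≤ d := by exact_mod_cast hd
  obtain ⟨C₁, hC₁, h₁⟩ := tsum_bracketPow_mul_bracketPow_le (d := d) (a := d - 2) (b := d - 2)
    (by linarith) (by linarith) (by linarith)
  obtain ⟨C₂, hC₂, h₂⟩ := tsum_bracketPow_mul_bracketPow_le (d := d) (a := d - 4) (b := d - 2)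
    (by linarith) (by linarith) (by linarith)
  simp only [neg_sub, show (d : ℝ) - (d - 2) - (d - 2) = 4 - d by ring,
    show (d : ℝ) - (d - 4) - (d - 2) = 6 - d by ring] at h₁ h₂
  refine ⟨C₁ * C₂, mul_pos hC₁ hC₂, fun x y hxy => ?_⟩
  calc ∑' z₁ : Fin d → ℤ, ∑' z₂ : Fin d → ℤ,
        latPow (x - z₁) ((2 : ℝ) - d) * latPow (z₁ - z₂) ((2 : ℝ) - d) *
          latPow (z₂ - y) ((2 : ℝ) - d)
      ≤ ∑' z₂, (∑' z₁, bracketPow (x - z₁) (2 - d) * bracketPow (z₁ - z₂) (2 - d)) *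
          bracketPow (z₂ - y) (2 - d) := by
        rw [ENNReal.tsum_comm]
        simp_rw [← ENNReal.tsum_mul_right]
        gcongr <;> exact latPow_le_bracketPow _ _
    _ ≤ ∑' z₂, ENNReal.ofReal C₁ * (bracketPow (x - z₂) (4 - d) * bracketPow (z₂ - y) (2 - d)) := by
        simp_rw [← mul_assoc]
        gcongr with z₂
        exact h₁ x z₂
    _ ≤ ENNReal.ofReal C₁ * (ENNReal.ofReal C₂ * bracketPow (x - y) (6 - d)) := by
        rw [ENNReal.tsum_mul_left]
        gcongr
        exact h₂ x y
    _ = ENNReal.ofReal (C₁ * C₂ * ‖x - y‖ ^ ((6 : ℝ) - d)) := by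
        rw [bracketPow, max_eq_right (one_le_norm_of_ne_zero (sub_ne_zero.mpr hxy)),
          ← ENNReal.ofReal_mul hC₂.le, ← ENNReal.ofReal_mul hC₁.le, mul_assoc]
end

section
/- Let d > 6 be an integer. Then the triangle-condition sum is finite: ∑_{x, y ∈ ℤ^d} |x|^{2−d} |x − y|^{2−d} |y|^{2−d} < ∞, where terms with x = 0, x = y, or y = 0 are omitted from the sum. -/
open scoped ENNReal

/-!
Put `a = 2 - d ≤ 0` and `s = 3a/2`. If `C` is the largest of three positive reals `A, B, C`, then
`AB ≤ C²`, so `(ABC)^a ≤ (AB)^s`. Hence the summand is at most the sum of the three products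
`|u|^s |v|^s` over the pairs `{u, v} ⊆ {x, x - y, y}`. Each such pair determines `(x, y)` by a
unimodular change of variables, so each of the three double sums factors as `(∑_z |z|^s)²`, which is
finite because `s < -d` exactly when `d > 6` (`ZLattice.summable_norm_rpow` for the lattice `ℤ^d`).
-/

theorem summable_pi_int_norm_rpow {ι : Type*} [Fintype ι] {r : ℝ} (hr : r < -Fintype.card ι) :
    Summable fun x : ι → ℤ => ‖x‖ ^ r := by
  let b := Pi.basisFun ℝ ι
  let L := Submodule.span ℤ (Set.range b)
  let e : L ≃ₗ[ℤ] (ι → ℤ) := (b.restrictScalars ℤ).equivFun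
  have hrank : Module.finrank ℤ L = Fintype.card ι := by
    rw [ZLattice.rank ℝ, Module.finrank_fintype_fun_eq_card]
  refine (e.toEquiv.summable_iff (f := fun x => ‖x‖ ^ r)).mp
    ((ZLattice.summable_norm_rpow L r (by rwa [hrank])).congr fun z => ?_)
  have hcoe : (z : ι → ℝ) = fun i => (e z i : ℝ) :=
    funext fun i => (b.restrictScalars_repr_apply ℤ z i).symm
  -- the norm of `n : ℤ` is by definition that of `(n : ℝ)`
  have hnorm : ‖z‖ = ‖e z‖ := by rw [← Submodule.norm_coe, hcoe]; rfl
  rw [hnorm]; rfl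

theorem latPow_of_ne_zero {d : ℕ} {x : Fin d → ℤ} (hx : x ≠ 0) (a : ℝ) :
    latPow x a = ENNReal.ofReal (‖x‖ ^ a) :=
  if_neg hx

theorem latPow_eq_ofReal {d : ℕ} (x : Fin d → ℤ) {a : ℝ} (ha : a ≠ 0) :
    latPow x a = ENNReal.ofReal (‖x‖ ^ a) := by
  rcases eq_or_ne x 0 with rfl | hx
  · simp [latPow, Real.zero_rpow ha]
  · exact latPow_of_ne_zero hx a

theorem tsum_latPow_lt_top {d : ℕ} {r : ℝ} (hr : r < -d) :
    ∑' x : Fin d → ℤ, latPow x r < ⊤ := by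
  have hr0 : r ≠ 0 := by have : (0 : ℝ) ≤ d := d.cast_nonneg; linarith
  simp only [latPow_eq_ofReal _ hr0]
  rw [← ENNReal.ofReal_tsum_of_nonneg (fun _ => by positivity)
    (summable_pi_int_norm_rpow (by simpa using hr))]
  exact ENNReal.ofReal_lt_top

theorem rpow_mul_rpow_mul_rpow_le {A B C a : ℝ} (ha : a ≤ 0) (hA : 0 < A) (hB : 0 < B)
    (hAC : A ≤ C) (hBC : B ≤ C) :
    A ^ a * B ^ a * C ^ a ≤ A ^ (3 / 2 * a) * B ^ (3 / 2 * a) := by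
  have hC : 0 < C := hA.trans_le hAC
  have hCa : C ^ a ≤ A ^ (a / 2) * B ^ (a / 2) := by
    rw [← Real.mul_rpow hA.le hB.le, show C ^ a = (C ^ 2) ^ (a / 2) by
      rw [← Real.rpow_natCast, ← Real.rpow_mul hC.le]; ring_nf]
    exact Real.rpow_le_rpow_of_nonpos (by positivity) (by nlinarith) (by linarith)
  calc A ^ a * B ^ a * C ^ a ≤ A ^ a * B ^ a * (A ^ (a / 2) * B ^ (a / 2)) := by gcongr
    _ = A ^ (3 / 2 * a) * B ^ (3 / 2 * a) := by
      rw [show 3 / 2 * a = a + a / 2 by ring, Real.rpow_add hA, Real.rpow_add hB]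
      ring

theorem rpow_mul_rpow_mul_rpow_le_add {A B C a : ℝ} (ha : a ≤ 0) (hA : 0 < A) (hB : 0 < B)
    (hC : 0 < C) :
    A ^ a * B ^ a * C ^ a ≤ A ^ (3 / 2 * a) * B ^ (3 / 2 * a) + B ^ (3 / 2 * a) * C ^ (3 / 2 * a)
      + A ^ (3 / 2 * a) * C ^ (3 / 2 * a) := by
  have hAB₀ : 0 ≤ A ^ (3 / 2 * a) * B ^ (3 / 2 * a) := by positivity
  have hBC₀ : 0 ≤ B ^ (3 / 2 * a) * C ^ (3 / 2 * a) := by positivity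
  have hAC₀ : 0 ≤ A ^ (3 / 2 * a) * C ^ (3 / 2 * a) := by positivity
  rcases le_total A C with hAC | hCA
  · rcases le_total B C with hBC | hCB
    · linarith [rpow_mul_rpow_mul_rpow_le ha hA hB hAC hBC]
    · linarith [rpow_mul_rpow_mul_rpow_le ha hA hC (hAC.trans hCB) hCB]
  · rcases le_total B A with hBA | hAB
    · linarith [rpow_mul_rpow_mul_rpow_le ha hB hC hBA hCA]
    · linarith [rpow_mul_rpow_mul_rpow_le ha hA hC hAB (hCA.trans hAB)]

theorem latPow_mul_latPow_mul_latPow_le {d : ℕ} {a : ℝ} (ha : a ≤ 0) (u v w : Fin d → ℤ) :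
    latPow u a * latPow v a * latPow w a ≤
      latPow u (3 / 2 * a) * latPow v (3 / 2 * a) + latPow v (3 / 2 * a) * latPow w (3 / 2 * a)
        + latPow u (3 / 2 * a) * latPow w (3 / 2 * a) := by
  rcases eq_or_ne u 0 with rfl | hu
  · simp [latPow]
  rcases eq_or_ne v 0 with rfl | hv
  · simp [latPow]
  rcases eq_or_ne w 0 with rfl | hw
  · simp [latPow]
  simp only [latPow_of_ne_zero hu, latPow_of_ne_zero hv, latPow_of_ne_zero hw]
  simp (disch := positivity) only [← ENNReal.ofReal_mul, ← ENNReal.ofReal_add]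
  exact ENNReal.ofReal_le_ofReal (rpow_mul_rpow_mul_rpow_le_add ha (norm_pos_iff.2 hu)
    (norm_pos_iff.2 hv) (norm_pos_iff.2 hw))

theorem ENNReal.tsum_tsum_mul_sub_right {G : Type*} [AddGroup G] (f g : G → ℝ≥0∞) :
    ∑' x, ∑' y, f x * g (x - y) = (∑' x, f x) * ∑' y, g y := by
  calc ∑' x, ∑' y, f x * g (x - y) = ∑' x, f x * ∑' y, g (x - y) :=
        tsum_congr fun _ => ENNReal.tsum_mul_left
    _ = ∑' x, f x * ∑' y, g y :=
        tsum_congr fun x => congrArg (f x * ·) ((Equiv.subLeft x).tsum_eq g)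
    _ = _ := ENNReal.tsum_mul_right

theorem ENNReal.tsum_tsum_sub_mul {G : Type*} [AddGroup G] (f g : G → ℝ≥0∞) :
    ∑' x, ∑' y, f (x - y) * g y = (∑' x, f x) * ∑' y, g y := by
  calc ∑' x, ∑' y, f (x - y) * g y = ∑' y, (∑' x, f (x - y)) * g y := by
        rw [ENNReal.tsum_comm]; exact tsum_congr fun _ => ENNReal.tsum_mul_right
    _ = ∑' y, (∑' x, f x) * g y :=
        tsum_congr fun y => congrArg (· * g y) ((Equiv.subRight y).tsum_eq f)
    _ = _ := ENNReal.tsum_mul_left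

theorem statement9 (d : ℕ) (hd : 6 < d) :
    ∑' x : Fin d → ℤ, ∑' y : Fin d → ℤ,
      latPow x ((2 : ℝ) - d) * latPow (x - y) ((2 : ℝ) - d) * latPow y ((2 : ℝ) - d) < ⊤ := by
  set s : ℝ := 3 / 2 * ((2 : ℝ) - d)
  have hd' : (6 : ℝ) < d := by exact_mod_cast hd
  have hs : s < -d := by simp only [s]; linarith
  calc _ ≤ ∑' x : Fin d → ℤ, ∑' y : Fin d → ℤ, (latPow x s * latPow (x - y) s
        + latPow (x - y) s * latPow y s + latPow x s * latPow y s) :=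
        ENNReal.tsum_le_tsum fun x => ENNReal.tsum_le_tsum fun y =>
          latPow_mul_latPow_mul_latPow_le (by linarith) _ _ _
    _ = 3 * ((∑' z : Fin d → ℤ, latPow z s) * ∑' z : Fin d → ℤ, latPow z s) := by
      simp only [ENNReal.tsum_add]
      rw [ENNReal.tsum_tsum_mul_sub_right (latPow · s) (latPow · s),
        ENNReal.tsum_tsum_sub_mul (latPow · s) (latPow · s)]
      simp only [ENNReal.tsum_mul_left, ENNReal.tsum_mul_right]
      ring
    _ < ⊤ := by have := tsum_latPow_lt_top hs; finiteness
end

section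
/- Let c, C > 0 be real constants, δ ∈ (0, 1), γ > 0, and let N be a positive integer with (1 + γ)^N ≤ 2 and c ≥ 4C(1 − δ)^N. Let π : ℝ → ℝ be nonincreasing on (0, ∞) and satisfy c/t² ≤ π(t) ≤ C/t² for all t > 0. Then for every r > 0 there exists j ∈ {1, …, N} such that, setting r₀ := (1 + γ)^{j−1} r / 2, one has r/2 ≤ r₀ ≤ r and π((1 + γ) r₀) ≥ (1 − δ) π(r₀). -/
/-!
Along the geometric radii `aₖ = (1 + γ)ᵏ r / 2`, `k ≤ N`, which stay in `[r/2, r]`, the two-sided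
bounds and monotonicity give `π(a_N) ≥ π(r) ≥ c / r² ≥ 4C(1 - δ)ᴺ / r² ≥ (1 - δ)ᴺ π(r/2)`. So `π`
cannot drop by a factor `1 - δ` at each of the `N` steps, and some step is regular.
-/

theorem exists_mul_le_succ_of_pow_mul_le {u : ℕ → ℝ} {q : ℝ} (hq : 0 ≤ q) {n : ℕ} (hn : 0 < n)
    (h : q ^ n * u 0 ≤ u n) : ∃ k < n, q * u k ≤ u (k + 1) := by
  by_contra! hlt
  exact (lt_geom hq hn hlt).not_ge h

theorem half_le_pow_mul_half {γ r : ℝ} (hγ : 0 < γ) (hr : 0 < r) (k : ℕ) :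
    r / 2 ≤ (1 + γ) ^ k * r / 2 := by
  have : (1 : ℝ) ≤ (1 + γ) ^ k := one_le_pow₀ (by linarith)
  nlinarith

theorem pow_mul_half_le {γ r : ℝ} (hγ : 0 < γ) (hr : 0 < r) {k N : ℕ} (hk : k ≤ N)
    (hpow : (1 + γ) ^ N ≤ 2) : (1 + γ) ^ k * r / 2 ≤ r := by
  have : (1 + γ) ^ k ≤ 2 := (pow_le_pow_right₀ (by linarith) hk).trans hpow
  nlinarith

theorem mul_apply_half_le {π : ℝ → ℝ} {C c q r : ℝ} (hq : 0 ≤ q) (hr : 0 < r)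
    (hup : π (r / 2) ≤ C / (r / 2) ^ 2) (hcC : 4 * C * q ≤ c) : q * π (r / 2) ≤ c / r ^ 2 :=
  calc q * π (r / 2) ≤ q * (C / (r / 2) ^ 2) := mul_le_mul_of_nonneg_left hup hq
    _ = 4 * C * q / r ^ 2 := by field_simp; ring
    _ ≤ c / r ^ 2 := by gcongr

theorem statement10_general (c C δ γ : ℝ)
    (hδ1 : δ < 1) (hγ : 0 < γ)
    (N : ℕ) (hN : 0 < N) (hpow : (1 + γ) ^ N ≤ 2) (hcC : 4 * C * (1 - δ) ^ N ≤ c)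
    (π : ℝ → ℝ)
    (hmono : ∀ s t : ℝ, 0 < s → s ≤ t → π t ≤ π s)
    (hlow : ∀ t : ℝ, 0 < t → c / t ^ 2 ≤ π t)
    (hup : ∀ t : ℝ, 0 < t → π t ≤ C / t ^ 2) :
    ∀ r : ℝ, 0 < r → ∃ j : ℕ, 1 ≤ j ∧ j ≤ N ∧
      r / 2 ≤ (1 + γ) ^ (j - 1) * r / 2 ∧ (1 + γ) ^ (j - 1) * r / 2 ≤ r ∧
      (1 - δ) * π ((1 + γ) ^ (j - 1) * r / 2) ≤
        π ((1 + γ) * ((1 + γ) ^ (j - 1) * r / 2)) := by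
  intro r hr
  have hq : (0 : ℝ) ≤ 1 - δ := by linarith
  have hend : (1 - δ) ^ N * π ((1 + γ) ^ 0 * r / 2) ≤ π ((1 + γ) ^ N * r / 2) :=
    calc (1 - δ) ^ N * π ((1 + γ) ^ 0 * r / 2)
        ≤ c / r ^ 2 := by
          rw [pow_zero, one_mul]
          exact mul_apply_half_le (pow_nonneg hq N) hr (hup _ (by positivity)) hcC
      _ ≤ π r := hlow r hr
      _ ≤ π ((1 + γ) ^ N * r / 2) :=
          hmono _ _ ((half_pos hr).trans_le (half_le_pow_mul_half hγ hr N))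
            (pow_mul_half_le hγ hr le_rfl hpow)
  obtain ⟨k, hkN, hk⟩ := exists_mul_le_succ_of_pow_mul_le (u := fun k ↦ π ((1 + γ) ^ k * r / 2))
    hq hN hend
  refine ⟨k + 1, by omega, hkN, ?_, ?_, ?_⟩
  · exact half_le_pow_mul_half hγ hr _
  · exact pow_mul_half_le hγ hr (by omega) hpow
  · simp only [Nat.add_sub_cancel]
    convert hk using 2
    ring

theorem statement10 (c C δ γ : ℝ) (hc : 0 < c) (hC : 0 < C)
    (hδ0 : 0 < δ) (hδ1 : δ < 1) (hγ : 0 < γ)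
    (N : ℕ) (hN : 0 < N) (hpow : (1 + γ) ^ N ≤ 2) (hcC : 4 * C * (1 - δ) ^ N ≤ c)
    (π : ℝ → ℝ)
    (hmono : ∀ s t : ℝ, 0 < s → s ≤ t → π t ≤ π s)
    (hlow : ∀ t : ℝ, 0 < t → c / t ^ 2 ≤ π t)
    (hup : ∀ t : ℝ, 0 < t → π t ≤ C / t ^ 2) :
    ∀ r : ℝ, 0 < r → ∃ j : ℕ, 1 ≤ j ∧ j ≤ N ∧
      r / 2 ≤ (1 + γ) ^ (j - 1) * r / 2 ∧ (1 + γ) ^ (j - 1) * r / 2 ≤ r ∧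
      (1 - δ) * π ((1 + γ) ^ (j - 1) * r / 2) ≤
        π ((1 + γ) * ((1 + γ) ^ (j - 1) * r / 2)) :=
  statement10_general c C δ γ hδ1 hγ N hN hpow hcC π hmono hlow hup
end

section
/- Let d > 6 be a real number and let C̃ > 0. Suppose (Λ_k)_{k ≥ 0} is a sequence of real numbers with 0 ≤ Λ_k ≤ 1 for every k, such that for every integer k ≥ 1, every real ε > 0, and every real L ≥ 1 the recursive inequality Λ_k ≤ C̃ ( ε^{−1/2} · 3^{−k} + 3^{−k} + L^{d−1} · ε · 3^{k} · Λ_{k−1}² + L^{3 − d/2} · Λ_{k−1} + (3^{k})^{2 − d/2} ) holds. Then there exists a constant D > 0 such that Λ_k ≤ D · 3^{−k} for all k ≥ 0. -/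
set_option maxHeartbeats 1600000 in
theorem statement11 (d : ℝ) (hd : 6 < d) (Ctil : ℝ) (hCtil : 0 < Ctil)
    (Λ : ℕ → ℝ) (hΛ0 : ∀ k, 0 ≤ Λ k) (hΛ1 : ∀ k, Λ k ≤ 1)
    (hrec : ∀ k : ℕ, 1 ≤ k → ∀ ε : ℝ, 0 < ε → ∀ L : ℝ, 1 ≤ L →
      Λ k ≤ Ctil * (ε ^ (-(1 : ℝ) / 2) * (3 : ℝ) ^ (-(k : ℝ)) + (3 : ℝ) ^ (-(k : ℝ)) +
        L ^ (d - 1) * ε * (3 : ℝ) ^ (k : ℕ) * Λ (k - 1) ^ 2 +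
        L ^ (3 - d / 2) * Λ (k - 1) + ((3 : ℝ) ^ (k : ℕ)) ^ ((2 : ℝ) - d / 2))) :
    ∃ D : ℝ, 0 < D ∧ ∀ k : ℕ, Λ k ≤ D / 3 ^ k := by
  set Lc : ℝ := (9 * Ctil) ^ ((2 : ℝ) / (d - 6)) + 1 with hLcdef
  have h9C : (0:ℝ) < 9 * Ctil := by linarith
  have hLpos : 0 < (9 * Ctil) ^ ((2 : ℝ) / (d - 6)) := Real.rpow_pos_of_pos h9C _
  have hLc1 : 1 ≤ Lc := by rw [hLcdef]; linarith
  have hLcpos : 0 < Lc := by linarith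
  have hA1 : 1 ≤ Lc ^ (d - 1) := Real.one_le_rpow hLc1 (by linarith)
  set A : ℝ := Lc ^ (d - 1) with hAdef
  have hApos : 0 < A := by linarith
  -- key bound on L^(3 - d/2)
  have hLckey : Lc ^ (3 - d / 2) ≤ 1 / (9 * Ctil) := by
    have h1 : Lc ^ (3 - d / 2) ≤ ((9 * Ctil) ^ ((2 : ℝ) / (d - 6))) ^ (3 - d / 2) :=
      Real.rpow_le_rpow_of_nonpos hLpos (by rw [hLcdef]; linarith) (by linarith)
    have h2 : ((9 * Ctil) ^ ((2 : ℝ) / (d - 6))) ^ (3 - d / 2)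
        = (9 * Ctil) ^ ((2 : ℝ) / (d - 6) * (3 - d / 2)) := (Real.rpow_mul h9C.le _ _).symm
    have h3 : (2 : ℝ) / (d - 6) * (3 - d / 2) = -1 := by
      have hne : d - 6 ≠ 0 := by linarith
      field_simp
      ring
    rw [h2, h3, Real.rpow_neg_one] at h1
    rw [one_div]
    exact h1
  have hBpos : 0 < Lc ^ (3 - d / 2) := Real.rpow_pos_of_pos hLcpos _
  set D : ℝ := max 1 (4 * Ctil + 648 * Ctil ^ 3 * A) with hDdef
  have hD1 : 1 ≤ D := le_max_left _ _
  have hD2 : 4 * Ctil + 648 * Ctil ^ 3 * A ≤ D := le_max_right _ _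
  have hDpos : 0 < D := by linarith
  set ε : ℝ := (6 * Ctil / D) ^ 2 with hεdef
  have haux : 0 < 6 * Ctil / D := by positivity
  have hεpos : 0 < ε := by positivity
  have hεkey : ε ^ (-(1 : ℝ) / 2) = D / (6 * Ctil) := by
    rw [hεdef, ← Real.rpow_natCast (6 * Ctil / D) 2, ← Real.rpow_mul haux.le]
    have h2 : ((2:ℕ):ℝ) * (-(1:ℝ)/2) = -1 := by norm_num
    rw [h2, Real.rpow_neg_one, inv_div]
  clear_value ε D A Lc
  refine ⟨D, hDpos, ?_⟩
  intro k
  induction k with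
  | zero => simpa using (hΛ1 0).trans hD1
  | succ n ih =>
    have hkey := hrec (n + 1) (by omega) ε hεpos Lc hLc1
    simp only [Nat.add_sub_cancel] at hkey
    set P : ℝ := (3 : ℝ) ^ (n + 1) with hPdef
    have hPpos : (0:ℝ) < P := by positivity
    have hP1 : (1:ℝ) ≤ P := one_le_pow₀ (by norm_num)
    have hP3 : P = 3 * 3 ^ n := by rw [hPdef]; ring
    clear_value P
    have hΛn : Λ n ≤ 3 * D / P := by
      rw [hP3]
      have h3n : (0:ℝ) < 3 ^ n := by positivity
      calc Λ n ≤ D / 3 ^ n := ih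
        _ = 3 * D / (3 * 3 ^ n) := by field_simp
    -- rewrite the rpow powers of 3
    have h3neg : (3 : ℝ) ^ (-((n + 1 : ℕ) : ℝ)) = P⁻¹ := by
      rw [hPdef, Real.rpow_neg (by norm_num), Real.rpow_natCast]
    rw [h3neg, hεkey, ← hAdef] at hkey
    -- bound the fifth term
    have h5 : (P : ℝ) ^ ((2 : ℝ) - d / 2) ≤ P⁻¹ := by
      have := Real.rpow_le_rpow_of_exponent_le hP1 (show (2:ℝ) - d/2 ≤ -1 by linarith)
      rwa [Real.rpow_neg_one] at this
    -- bound the third term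
    have h3b : A * ε * P * Λ n ^ 2 ≤ 324 * Ctil ^ 2 * A / P := by
      have hsq : Λ n ^ 2 ≤ (3 * D / P) ^ 2 := by
        have := hΛ0 n
        nlinarith
      have : A * ε * P * Λ n ^ 2 ≤ A * ε * P * (3 * D / P) ^ 2 := by
        have h1 : 0 ≤ A * ε * P := by positivity
        nlinarith
      refine this.trans (le_of_eq ?_)
      rw [hεdef]
      field_simp
      ring
    -- bound the fourth term
    have h4b : Lc ^ (3 - d / 2) * Λ n ≤ D / (3 * Ctil) / P := by
      calc Lc ^ (3 - d / 2) * Λ n ≤ (1 / (9 * Ctil)) * (3 * D / P) := by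
            apply mul_le_mul hLckey hΛn (hΛ0 n) (by positivity)
        _ = D / (3 * Ctil) / P := by field_simp; ring
    have hsum : Λ (n + 1) ≤ Ctil * (D / (6 * Ctil) * P⁻¹ + P⁻¹ +
        324 * Ctil ^ 2 * A / P + D / (3 * Ctil) / P + P⁻¹) := by
      refine hkey.trans ?_
      have := hCtil.le
      gcongr
    have heq : Ctil * (D / (6 * Ctil) * P⁻¹ + P⁻¹ +
        324 * Ctil ^ 2 * A / P + D / (3 * Ctil) / P + P⁻¹) =
        (D / 6 + 2 * Ctil + 324 * Ctil ^ 3 * A + D / 3) / P := by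
      have gen : ∀ (c y p a : ℝ), c ≠ 0 → p ≠ 0 →
          c * (y / (6 * c) * p⁻¹ + p⁻¹ + 324 * c ^ 2 * a / p + y / (3 * c) / p + p⁻¹) =
          (y / 6 + 2 * c + 324 * c ^ 3 * a + y / 3) / p := by
        intro c y p a hc hp; field_simp; ring
      exact gen Ctil D P A (ne_of_gt hCtil) (ne_of_gt hPpos)
    rw [heq] at hsum
    refine hsum.trans ?_
    exact (div_le_div_iff_of_pos_right hPpos).mpr (by linarith)
end

section
/- Let d > 6 be an integer. There exists a constant C = C(d) > 0 such that for all w, y ∈ ℤ^d with w ≠ y, one has ∑_{u, v ∈ ℤ^d} |u − v|^{2−d} |v − w|^{2−d} |w − u|^{2−d} |y − u|^{2−d} ≤ C |w − y|^{2−d}, where terms in which any of u − v, v − w, w − u, y − u vanishes are omitted from the sum. -/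
/-!
Dominate the omitted-at-zero powers by `⟨x⟩ ^ (-s)`, where `⟨x⟩ = max 1 |x|` (`bracket x`),
so that no estimate needs a case split at coinciding points. Dyadic shells `ρ ≤ ⟨x⟩ ≤ 2ρ` hold at most `(6ρ)^d` lattice
points, so `∑_{⟨x⟩ ≥ R} ⟨x⟩^{-s} ≲ R^{d-s}` for `s > d` and `∑_{⟨x⟩ ≤ R} ⟨x⟩^{-a} ≲ R^{d-a}`
for `0 ≤ a < d`. Splitting `v` according to which of `v - p`, `v - q` is nearer gives the
convolution bound `∑_v ⟨v-p⟩^{-a} ⟨v-q⟩^{-b} ≲ ⟨p-q⟩^{d-a-b}` for `a, b < d < a + b`.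
With `t = d - 2`, summing over `v` turns the loop into `⟨u-w⟩^{4-d}`; then
`⟨w-u⟩^{-t} ⟨y-u⟩^{-t} ≲ ⟨w-y⟩^{-t} (⟨w-u⟩^{-t} + ⟨y-u⟩^{-t})` leaves the sums
`∑_u ⟨u-w⟩^{6-2d}`, finite as `d > 6`, and `∑_u ⟨u-w⟩^{4-d} ⟨u-y⟩^{2-d} ≲ ⟨w-y⟩^{6-d} ≤ 1`.
-/

open scoped ENNReal

open scoped NNReal

lemma tsum_indicator_le_of_subset_iUnion {α : Type*} (f : α → ℝ≥0∞) {S : Set α}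
    {A : ℕ → Set α} (h : S ⊆ ⋃ k, A k) :
    ∑' x, S.indicator f x ≤ ∑' k, ∑' x, (A k).indicator f x := by
  simp_rw [← tsum_subtype]
  exact (ENNReal.tsum_mono_subtype f h).trans (ENNReal.tsum_iUnion_le_tsum f A)

lemma tsum_ofReal_mul_rpow_geometric {C ρ q t : ℝ} (hC : 0 ≤ C) (hρ : 0 < ρ) (hq : 0 < q)
    (hqt : q ^ t < 1) :
    ∑' k : ℕ, ENNReal.ofReal (C * (ρ * q ^ k) ^ t) = ENNReal.ofReal (C / (1 - q ^ t) * ρ ^ t) := by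
  have hterm : ∀ k : ℕ, C * (ρ * q ^ k) ^ t = C * ρ ^ t * (q ^ t) ^ k := fun k => by
    rw [Real.mul_rpow hρ.le (by positivity), ← Real.rpow_pow_comm hq.le, mul_assoc]
  simp_rw [hterm]
  rw [← ENNReal.ofReal_tsum_of_nonneg (fun k => by positivity)
    ((summable_geometric_of_lt_one (by positivity) hqt).mul_left _), tsum_mul_left,
    tsum_geometric_of_lt_one (by positivity) hqt, div_eq_mul_inv]
  ring_nf

lemma tsum_comp_sub_right {G : Type*} [AddGroup G] (f : G → ℝ≥0∞) (p : G) :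
    ∑' v, f (v - p) = ∑' x, f x :=
  (Equiv.subRight p).tsum_eq f

namespace LatticeSum

variable {d : ℕ}

noncomputable def bracket (x : Fin d → ℤ) : ℝ := max 1 ‖x‖

noncomputable def weight (s : ℝ) (x : Fin d → ℤ) : ℝ≥0∞ := ENNReal.ofReal (bracket x ^ (-s))

lemma one_le_bracket (x : Fin d → ℤ) : 1 ≤ bracket x := le_max_left _ _

lemma bracket_pos (x : Fin d → ℤ) : 0 < bracket x := one_pos.trans_le (one_le_bracket x)

lemma one_le_norm_of_ne_zero {x : Fin d → ℤ} (hx : x ≠ 0) : 1 ≤ ‖x‖ := by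
  obtain ⟨i, hi⟩ := Function.ne_iff.mp hx
  calc (1 : ℝ) ≤ ‖x i‖ := by rw [Int.norm_eq_abs]; exact_mod_cast Int.one_le_abs hi
    _ ≤ ‖x‖ := norm_le_pi_norm x i

lemma bracket_eq_norm {x : Fin d → ℤ} (hx : x ≠ 0) : bracket x = ‖x‖ :=
  max_eq_right (one_le_norm_of_ne_zero hx)

lemma bracket_sub_le (x y : Fin d → ℤ) : bracket (x - y) ≤ bracket x + bracket y :=
  max_le (by linarith [one_le_bracket x, one_le_bracket y])
    ((norm_sub_le x y).trans (add_le_add (le_max_right _ _) (le_max_right _ _)))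

lemma bracket_sub_comm (x y : Fin d → ℤ) : bracket (x - y) = bracket (y - x) := by
  rw [bracket, bracket, norm_sub_rev]

lemma weight_sub_comm (s : ℝ) (x y : Fin d → ℤ) : weight s (x - y) = weight s (y - x) := by
  rw [weight, weight, bracket_sub_comm]

lemma weight_mul_weight (a b : ℝ) (x : Fin d → ℤ) :
    weight a x * weight b x = weight (a + b) x := by
  rw [weight, weight, weight, ← ENNReal.ofReal_mul (by positivity [bracket_pos x]),
    ← Real.rpow_add (bracket_pos x), neg_add]

lemma weight_le_of_le_bracket {s ρ : ℝ} (hs : 0 ≤ s) (hρ : 0 < ρ) {x : Fin d → ℤ}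
    (h : ρ ≤ bracket x) : weight s x ≤ ENNReal.ofReal (ρ ^ (-s)) :=
  ENNReal.ofReal_le_ofReal (Real.rpow_le_rpow_of_nonpos hρ h (neg_nonpos.mpr hs))

lemma weight_le_one {s : ℝ} (hs : 0 ≤ s) (x : Fin d → ℤ) : weight s x ≤ 1 := by
  simpa using weight_le_of_le_bracket hs one_pos (one_le_bracket x)

lemma ofReal_half_bracket_rpow_neg (t : ℝ) (x : Fin d → ℤ) :
    ENNReal.ofReal ((bracket x / 2) ^ (-t)) = ENNReal.ofReal (2 ^ t) * weight t x := by
  rw [weight, ← ENNReal.ofReal_mul (by positivity), Real.div_rpow (bracket_pos _).le zero_le_two,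
    div_eq_mul_inv, ← Real.rpow_neg zero_le_two, neg_neg, mul_comm]

lemma latPow_neg_le_weight (s : ℝ) (x : Fin d → ℤ) : latPow x (-s) ≤ weight s x := by
  unfold latPow
  split_ifs with hx
  · exact zero_le
  · rw [← bracket_eq_norm hx]; rfl

lemma tsum_le_of_bracket_le {f : (Fin d → ℤ) → ℝ≥0∞} {ρ : ℝ} {c : ℝ≥0∞}
    (hsupp : ∀ x, f x ≠ 0 → bracket x ≤ ρ) (hc : ∀ x, f x ≤ c) :
    ∑' x, f x ≤ ENNReal.ofReal ((3 * ρ) ^ d) * c := by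
  rcases lt_or_ge ρ 1 with hρ | hρ
  · have hf : ∀ x, f x = 0 := fun x => by
      by_contra h; linarith [hsupp x h, one_le_bracket x]
    simp [hf]
  set m := ⌊ρ⌋₊
  let box : Finset (Fin d → ℤ) := Finset.Icc (fun _ => -(m : ℤ)) (fun _ => m)
  have hbox : ∀ x ∉ box, f x = 0 := by
    intro x hx
    by_contra h
    refine hx (Finset.mem_Icc.mpr ⟨fun i => ?_, fun i => ?_⟩) <;>
    · have hxi : |(x i : ℝ)| ≤ ρ :=
        (norm_le_pi_norm x i).trans ((le_max_right _ _).trans (hsupp x h))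
      have : (x i).natAbs ≤ m := Nat.le_floor (by rwa [Nat.cast_natAbs, Int.cast_abs])
      dsimp only; omega
  have hcard : (box.card : ℝ) ≤ (3 * ρ) ^ d := by
    have : box.card = (2 * m + 1) ^ d := by
      simp only [box, Pi.card_Icc, Int.card_Icc, Finset.prod_const, Finset.card_univ,
        Fintype.card_fin]
      congr; omega
    rw [this]; push_cast
    gcongr
    linarith [Nat.floor_le (by linarith : (0 : ℝ) ≤ ρ)]
  calc ∑' x, f x = ∑ x ∈ box, f x := tsum_eq_sum hbox
    _ ≤ box.card • c := Finset.sum_le_card_nsmul _ _ _ fun x _ => hc x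
    _ ≤ ENNReal.ofReal ((3 * ρ) ^ d) * c := by
      rw [nsmul_eq_mul]
      gcongr
      rw [← ENNReal.ofReal_natCast]
      exact ENNReal.ofReal_le_ofReal hcard

lemma tsum_indicator_weight_shell_le {s ρ : ℝ} (hs : 0 ≤ s) (hρ : 0 < ρ) :
    ∑' x, {x : Fin d → ℤ | ρ ≤ bracket x ∧ bracket x ≤ 2 * ρ}.indicator (weight s) x ≤
      ENNReal.ofReal (6 ^ d * ρ ^ ((d : ℝ) - s)) := by
  refine (tsum_le_of_bracket_le (ρ := 2 * ρ) (c := ENNReal.ofReal (ρ ^ (-s)))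
    (fun x hx => (Set.mem_of_indicator_ne_zero hx).2) fun x => ?_).trans_eq ?_
  · exact Set.indicator_le (fun y hy => weight_le_of_le_bracket hs hρ hy.1) x
  · rw [← ENNReal.ofReal_mul (by positivity), sub_eq_add_neg, Real.rpow_add hρ,
      Real.rpow_natCast]
    ring_nf

lemma exists_tsum_indicator_weight_tail_le {s : ℝ} (hs : d < s) :
    ∃ C : ℝ≥0, ∀ R > 0, ∑' x, {x : Fin d → ℤ | R ≤ bracket x}.indicator (weight s) x ≤
      C * ENNReal.ofReal (R ^ ((d : ℝ) - s)) := by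
  have hq : (2 : ℝ) ^ ((d : ℝ) - s) < 1 :=
    Real.rpow_lt_one_of_one_lt_of_neg one_lt_two (by linarith)
  refine ⟨((6 : ℝ) ^ d / (1 - 2 ^ ((d : ℝ) - s))).toNNReal, fun R hR => ?_⟩
  have hcover : {x : Fin d → ℤ | R ≤ bracket x} ⊆
      ⋃ k : ℕ, {x | R * 2 ^ k ≤ bracket x ∧ bracket x ≤ 2 * (R * 2 ^ k)} := by
    intro x hx
    obtain ⟨k, hk₁, hk₂⟩ := exists_nat_pow_near ((one_le_div hR).mpr hx) one_lt_two
    rw [le_div_iff₀ hR, mul_comm] at hk₁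
    rw [div_lt_iff₀ hR, pow_succ] at hk₂
    exact Set.mem_iUnion.mpr ⟨k, hk₁, by linarith⟩
  calc _ ≤ _ := tsum_indicator_le_of_subset_iUnion _ hcover
    _ ≤ ∑' k : ℕ, ENNReal.ofReal (6 ^ d * (R * 2 ^ k) ^ ((d : ℝ) - s)) :=
        ENNReal.tsum_le_tsum fun k =>
          tsum_indicator_weight_shell_le (by linarith [(Nat.cast_nonneg d : (0 : ℝ) ≤ d)])
            (by positivity)
    _ = _ := by
        rw [tsum_ofReal_mul_rpow_geometric (by positivity) hR two_pos hq,
          ENNReal.ofReal_mul (div_nonneg (by positivity) (by linarith))]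
        rfl

lemma exists_tsum_indicator_weight_ball_le {a : ℝ} (ha₀ : 0 ≤ a) (ha : a < d) :
    ∃ C : ℝ≥0, ∀ R > 0, ∑' x, {x : Fin d → ℤ | bracket x ≤ R}.indicator (weight a) x ≤
      C * ENNReal.ofReal (R ^ ((d : ℝ) - a)) := by
  have hq : (2⁻¹ : ℝ) ^ ((d : ℝ) - a) < 1 :=
    Real.rpow_lt_one (by norm_num) (by norm_num) (by linarith)
  refine ⟨((6 : ℝ) ^ d / (1 - 2⁻¹ ^ ((d : ℝ) - a)) * 2⁻¹ ^ ((d : ℝ) - a)).toNNReal, fun R hR => ?_⟩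
  have hcover : {x : Fin d → ℤ | bracket x ≤ R} ⊆
      ⋃ k : ℕ, {x | R * 2⁻¹ * 2⁻¹ ^ k ≤ bracket x ∧ bracket x ≤ 2 * (R * 2⁻¹ * 2⁻¹ ^ k)} := by
    intro x hx
    have hb := bracket_pos x
    obtain ⟨k, hk₁, hk₂⟩ := exists_nat_pow_near ((one_le_div hb).mpr hx) one_lt_two
    rw [le_div_iff₀ hb] at hk₁
    rw [div_lt_iff₀ hb] at hk₂
    have e₁ : R * 2⁻¹ * 2⁻¹ ^ k = R / 2 ^ (k + 1) := by
      rw [pow_succ, inv_pow]; field_simp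
    have e₂ : 2 * (R * 2⁻¹ * 2⁻¹ ^ k) = R / 2 ^ k := by rw [inv_pow]; field_simp
    refine Set.mem_iUnion.mpr ⟨k, ?_, ?_⟩
    · rw [e₁, div_le_iff₀ (by positivity)]; linarith
    · rw [e₂, le_div_iff₀ (by positivity)]; linarith
  calc _ ≤ _ := tsum_indicator_le_of_subset_iUnion _ hcover
    _ ≤ ∑' k : ℕ, ENNReal.ofReal (6 ^ d * (R * 2⁻¹ * 2⁻¹ ^ k) ^ ((d : ℝ) - a)) :=
        ENNReal.tsum_le_tsum fun k => tsum_indicator_weight_shell_le ha₀ (by positivity)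
    _ = _ := by
        rw [tsum_ofReal_mul_rpow_geometric (by positivity) (by positivity) (by norm_num) hq,
          Real.mul_rpow hR.le (by norm_num), ← mul_assoc, mul_right_comm,
          ENNReal.ofReal_mul
            (mul_nonneg (div_nonneg (by positivity) (sub_nonneg.2 hq.le)) (by positivity))]
        rfl

-- In `weight a x * weight b y`, the factor `weight b y` becomes `ρ ^ (-b)` when `x` is near `0`
-- (`bracket x ≤ ρ`) and `weight b x` otherwise.
noncomputable def nearFarWeight (a b ρ : ℝ) (x : Fin d → ℤ) : ℝ≥0∞ :=
  {x : Fin d → ℤ | bracket x ≤ ρ}.indicator (weight a) x * ENNReal.ofReal (ρ ^ (-b)) +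
    {x : Fin d → ℤ | ρ ≤ bracket x}.indicator (weight (a + b)) x

lemma weight_mul_weight_le_nearFarWeight_of_bracket_le {a b ρ : ℝ} (hb : 0 ≤ b) (hρ : 0 < ρ)
    {x y : Fin d → ℤ} (hxy : bracket x ≤ bracket y) (hy : ρ ≤ bracket y) :
    weight a x * weight b y ≤ nearFarWeight a b ρ x := by
  rcases le_total (bracket x) ρ with hx | hx
  · refine le_add_right ?_
    rw [Set.indicator_of_mem (show x ∈ {x | bracket x ≤ ρ} from hx)]
    gcongr
    exact weight_le_of_le_bracket hb hρ hy
  · refine le_add_left ?_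
    rw [Set.indicator_of_mem (show x ∈ {x | ρ ≤ bracket x} from hx), ← weight_mul_weight]
    gcongr
    exact weight_le_of_le_bracket hb (bracket_pos x) hxy

lemma weight_mul_weight_le_nearFarWeight {a b ρ : ℝ} (ha : 0 ≤ a) (hb : 0 ≤ b) (hρ : 0 < ρ)
    {x y : Fin d → ℤ} (h : 2 * ρ ≤ bracket x + bracket y) :
    weight a x * weight b y ≤ nearFarWeight a b ρ x + nearFarWeight b a ρ y := by
  rcases le_total (bracket x) (bracket y) with hxy | hxy
  · exact (weight_mul_weight_le_nearFarWeight_of_bracket_le hb hρ hxy (by linarith)).trans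
      le_self_add
  · rw [mul_comm]
    exact (weight_mul_weight_le_nearFarWeight_of_bracket_le ha hρ hxy (by linarith)).trans
      le_add_self

lemma exists_tsum_nearFarWeight_le {a b : ℝ} (ha₀ : 0 ≤ a) (ha : a < d) (hab : d < a + b) :
    ∃ C : ℝ≥0, ∀ ρ > 0, ∑' x : Fin d → ℤ, nearFarWeight a b ρ x ≤
      C * ENNReal.ofReal (ρ ^ ((d : ℝ) - (a + b))) := by
  obtain ⟨C₁, h₁⟩ := exists_tsum_indicator_weight_ball_le ha₀ ha
  obtain ⟨C₂, h₂⟩ := exists_tsum_indicator_weight_tail_le hab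
  refine ⟨C₁ + C₂, fun ρ hρ => ?_⟩
  have hexp : ENNReal.ofReal (ρ ^ ((d : ℝ) - a)) * ENNReal.ofReal (ρ ^ (-b)) =
      ENNReal.ofReal (ρ ^ ((d : ℝ) - (a + b))) := by
    rw [← ENNReal.ofReal_mul (by positivity), ← Real.rpow_add hρ]
    ring_nf
  calc ∑' x, nearFarWeight a b ρ x
      ≤ C₁ * ENNReal.ofReal (ρ ^ ((d : ℝ) - a)) * ENNReal.ofReal (ρ ^ (-b)) +
          C₂ * ENNReal.ofReal (ρ ^ ((d : ℝ) - (a + b))) := by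
        simp only [nearFarWeight]
        rw [ENNReal.tsum_add, ENNReal.tsum_mul_right]
        gcongr
        exacts [h₁ ρ hρ, h₂ ρ hρ]
    _ = (C₁ + C₂) * ENNReal.ofReal (ρ ^ ((d : ℝ) - (a + b))) := by
        rw [mul_assoc, hexp, add_mul]

theorem exists_tsum_weight_mul_weight_le {a b : ℝ} (ha : a < d) (hb : b < d) (hab : d < a + b) :
    ∃ C : ℝ≥0, ∀ p q : Fin d → ℤ,
      ∑' v, weight a (v - p) * weight b (v - q) ≤ C * weight (a + b - d) (p - q) := by
  have ha₀ : 0 ≤ a := by linarith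
  have hb₀ : 0 ≤ b := by linarith
  obtain ⟨C₁, h₁⟩ := exists_tsum_nearFarWeight_le ha₀ ha hab
  obtain ⟨C₂, h₂⟩ := exists_tsum_nearFarWeight_le hb₀ hb (by linarith : (d : ℝ) < b + a)
  refine ⟨(C₁ + C₂) * (2 ^ (a + b - d) : ℝ).toNNReal, fun p q => ?_⟩
  set ρ := bracket (p - q) / 2 with hρ_def
  have hρ : 0 < ρ := half_pos (bracket_pos _)
  have hsplit : ∀ v, 2 * ρ ≤ bracket (v - p) + bracket (v - q) := fun v => by
    have := bracket_sub_le (v - q) (v - p)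
    rw [sub_sub_sub_cancel_left] at this
    linarith
  have hscale : ENNReal.ofReal (ρ ^ ((d : ℝ) - (a + b))) =
      ENNReal.ofReal (2 ^ (a + b - d)) * weight (a + b - d) (p - q) := by
    rw [show (d : ℝ) - (a + b) = -(a + b - d) by ring, ofReal_half_bracket_rpow_neg]
  calc ∑' v, weight a (v - p) * weight b (v - q)
      ≤ ∑' v, (nearFarWeight a b ρ (v - p) + nearFarWeight b a ρ (v - q)) :=
        ENNReal.tsum_le_tsum fun v => weight_mul_weight_le_nearFarWeight ha₀ hb₀ hρ (hsplit v)
    _ = ∑' x, nearFarWeight a b ρ x + ∑' x, nearFarWeight b a ρ x := by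
        rw [ENNReal.tsum_add, tsum_comp_sub_right (nearFarWeight a b ρ),
          tsum_comp_sub_right (nearFarWeight b a ρ)]
    _ ≤ C₁ * ENNReal.ofReal (ρ ^ ((d : ℝ) - (a + b))) +
          C₂ * ENNReal.ofReal (ρ ^ ((d : ℝ) - (a + b))) := by
        gcongr
        exacts [h₁ ρ hρ, add_comm b a ▸ h₂ ρ hρ]
    _ = _ := by
        rw [← add_mul, hscale, ENNReal.coe_mul, ENNReal.coe_add, mul_assoc]
        rfl

lemma tsum_weight_ne_top {s : ℝ} (hs : d < s) : ∑' x : Fin d → ℤ, weight s x ≠ ⊤ := by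
  obtain ⟨C, hC⟩ := exists_tsum_indicator_weight_tail_le hs
  have h := hC 1 one_pos
  simp only [one_le_bracket, Set.ofPred_true, Set.indicator_univ, Real.one_rpow,
    ENNReal.ofReal_one, mul_one] at h
  exact ne_top_of_le_ne_top ENNReal.coe_ne_top h

lemma weight_mul_weight_le_weight_sub {t : ℝ} (ht : 0 ≤ t) (x y : Fin d → ℤ) :
    weight t x * weight t y ≤
      ENNReal.ofReal (2 ^ t) * weight t (x - y) * (weight t x + weight t y) := by
  have hfar : ∀ z u : Fin d → ℤ, bracket z ≤ 2 * bracket u →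
      weight t u ≤ ENNReal.ofReal (2 ^ t) * weight t z := fun z u h =>
    (weight_le_of_le_bracket ht (half_pos (bracket_pos z)) (by linarith)).trans_eq
      (ofReal_half_bracket_rpow_neg t z)
  have hsub := bracket_sub_le x y
  rcases le_total (bracket x) (bracket y) with hxy | hxy
  · calc weight t x * weight t y ≤ weight t x * (ENNReal.ofReal (2 ^ t) * weight t (x - y)) := by
          gcongr; exact hfar _ _ (by linarith)
      _ ≤ _ := by rw [mul_comm]; gcongr; exact le_self_add
  · calc weight t x * weight t y ≤ ENNReal.ofReal (2 ^ t) * weight t (x - y) * weight t y := by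
          gcongr; exact hfar _ _ (by linarith)
      _ ≤ _ := by gcongr; exact le_add_self

lemma exists_tsum_weight_mul_weight_mul_weight_le (hd : 6 < d) :
    ∃ C : ℝ≥0, ∀ w y : Fin d → ℤ,
      ∑' u, weight ((d : ℝ) - 4) (u - w) *
          (weight ((d : ℝ) - 2) (u - w) * weight ((d : ℝ) - 2) (u - y)) ≤
        C * weight ((d : ℝ) - 2) (w - y) := by
  have hd' : (6 : ℝ) < d := by exact_mod_cast hd
  obtain ⟨C, hC⟩ := exists_tsum_weight_mul_weight_le (d := d) (a := d - 4) (b := d - 2)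
    (by linarith) (by linarith) (by linarith)
  set S := ∑' x : Fin d → ℤ, weight ((d : ℝ) - 4 + (d - 2)) x
  have hS : S ≠ ⊤ := tsum_weight_ne_top (by linarith)
  refine ⟨((2 : ℝ) ^ ((d : ℝ) - 2)).toNNReal * (S.toNNReal + C), fun w y => ?_⟩
  set W := weight (d := d) ((d : ℝ) - 2)
  have hmixed : ∑' u, weight ((d : ℝ) - 4) (u - w) * W (u - y) ≤ C := by
    refine (hC w y).trans ?_
    calc (C : ℝ≥0∞) * weight ((d : ℝ) - 4 + (d - 2) - d) (w - y) ≤ C * 1 := by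
          gcongr; exact weight_le_one (by linarith) _
      _ = C := mul_one _
  calc ∑' u, weight ((d : ℝ) - 4) (u - w) * (W (u - w) * W (u - y))
      ≤ ∑' u, weight ((d : ℝ) - 4) (u - w) *
          (ENNReal.ofReal (2 ^ ((d : ℝ) - 2)) * W (w - y) * (W (u - w) + W (u - y))) := by
        refine ENNReal.tsum_le_tsum fun u => mul_le_mul_right ?_ _
        have h := weight_mul_weight_le_weight_sub (t := (d : ℝ) - 2) (by linarith) (u - w) (u - y)
        rwa [sub_sub_sub_cancel_left, weight_sub_comm _ y w] at h
    _ = ENNReal.ofReal (2 ^ ((d : ℝ) - 2)) * W (w - y) *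
          (∑' u, weight ((d : ℝ) - 4 + (d - 2)) (u - w) +
            ∑' u, weight ((d : ℝ) - 4) (u - w) * W (u - y)) := by
        rw [← ENNReal.tsum_add, ← ENNReal.tsum_mul_left]
        refine tsum_congr fun u => ?_
        rw [← weight_mul_weight]
        ring
    _ ≤ ENNReal.ofReal (2 ^ ((d : ℝ) - 2)) * W (w - y) * (S + C) := by
        rw [tsum_comp_sub_right]
        gcongr
    _ = _ := by
        simp only [ENNReal.coe_mul, ENNReal.coe_add, ENNReal.coe_toNNReal hS]
        change _ = ENNReal.ofReal _ * (S + C) * W (w - y)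
        ring

theorem exists_tsum_tsum_triangle_le (hd : 6 < d) :
    ∃ C : ℝ≥0, ∀ w y : Fin d → ℤ,
      ∑' u, ∑' v, weight ((d : ℝ) - 2) (u - v) * weight ((d : ℝ) - 2) (v - w) *
          weight ((d : ℝ) - 2) (w - u) * weight ((d : ℝ) - 2) (y - u) ≤
        C * weight ((d : ℝ) - 2) (w - y) := by
  have hd' : (6 : ℝ) < d := by exact_mod_cast hd
  obtain ⟨C₁, h₁⟩ := exists_tsum_weight_mul_weight_le (d := d) (a := d - 2) (b := d - 2)
    (by linarith) (by linarith) (by linarith)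
  obtain ⟨C₂, h₂⟩ := exists_tsum_weight_mul_weight_mul_weight_le hd
  refine ⟨C₁ * C₂, fun w y => ?_⟩
  set W := weight (d := d) ((d : ℝ) - 2)
  have hW : ∀ x z, W (x - z) = W (z - x) := weight_sub_comm _
  have hloop : ∀ u, ∑' v, W (u - v) * W (v - w) ≤ C₁ * weight ((d : ℝ) - 4) (u - w) := by
    intro u
    have h := h₁ u w
    rw [show (d : ℝ) - 2 + (d - 2) - d = d - 4 by ring] at h
    exact (tsum_congr fun v => by rw [hW u v]).trans_le h
  calc ∑' u, ∑' v, W (u - v) * W (v - w) * W (w - u) * W (y - u)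
      = ∑' u, (∑' v, W (u - v) * W (v - w)) * (W (u - w) * W (u - y)) := by
        refine tsum_congr fun u => ?_
        rw [← ENNReal.tsum_mul_right, hW w u, hW y u]
        simp only [mul_assoc]
    _ ≤ ∑' u, C₁ * weight ((d : ℝ) - 4) (u - w) * (W (u - w) * W (u - y)) :=
        ENNReal.tsum_le_tsum fun u => mul_le_mul_left (hloop u) _
    _ = C₁ * ∑' u, weight ((d : ℝ) - 4) (u - w) * (W (u - w) * W (u - y)) := by
        rw [← ENNReal.tsum_mul_left]
        simp only [mul_assoc]
    _ ≤ C₁ * (C₂ * W (w - y)) := by gcongr; exact h₂ w y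
    _ = _ := by rw [ENNReal.coe_mul, mul_assoc]

end LatticeSum

open LatticeSum in
theorem statement12 (d : ℕ) (hd : 6 < d) :
    ∃ C : ℝ, 0 < C ∧ ∀ w y : Fin d → ℤ, w ≠ y →
      ∑' u : Fin d → ℤ, ∑' v : Fin d → ℤ,
        latPow (u - v) ((2 : ℝ) - d) * latPow (v - w) ((2 : ℝ) - d) *
          latPow (w - u) ((2 : ℝ) - d) * latPow (y - u) ((2 : ℝ) - d) ≤
        ENNReal.ofReal (C * ‖w - y‖ ^ ((2 : ℝ) - d)) := by
  obtain ⟨C, hC⟩ := exists_tsum_tsum_triangle_le hd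
  refine ⟨C + 1, by positivity, fun w y hwy => ?_⟩
  have hlat : ∀ x : Fin d → ℤ, latPow x ((2 : ℝ) - d) ≤ weight ((d : ℝ) - 2) x := fun x => by
    simpa using latPow_neg_le_weight ((d : ℝ) - 2) x
  calc _ ≤ ∑' u, ∑' v, weight ((d : ℝ) - 2) (u - v) * weight ((d : ℝ) - 2) (v - w) *
          weight ((d : ℝ) - 2) (w - u) * weight ((d : ℝ) - 2) (y - u) := by
        gcongr <;> exact hlat _
    _ ≤ C * weight ((d : ℝ) - 2) (w - y) := hC w y
    _ ≤ ENNReal.ofReal (C + 1) * ENNReal.ofReal (‖w - y‖ ^ ((2 : ℝ) - d)) := by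
        rw [weight, bracket_eq_norm (sub_ne_zero.mpr hwy), neg_sub, ← ENNReal.ofReal_coe_nnreal]
        gcongr
        linarith
    _ = _ := (ENNReal.ofReal_mul (by positivity)).symm
end
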